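/- arXiv:1312.2603 — 8 statements merged into one kernel-verified Lean document; each statement's English description precedes it below -/
import Mathlib

section
/- Let H₀ and H₁ be complex Hilbert spaces, let W : H₀ →L[ℂ] H₁ be a nonzero bounded linear map, and let A : H₁ →L[ℂ] H₁ be a bounded operator satisfying Re ⟨f, A f⟩ ≥ Δ ‖f‖² for all f ∈ H₁, where Δ > 0 (in particular A is boundedly invertible). Suppose there is α > 0 such that ‖A⁻¹ (W f)‖ ≥ α (‖W‖/Δ) ‖f‖ for all f ∈ H₀. Let L be the bounded operator on the Hilbert space direct sum H₀ ⊕ H₁ given in block form by L(f₀, f₁) = (−W† f₁, W f₀ + A f₁), where W† is the Hilbert-space adjoint of W. Then the spectrum of L is contained in the half-plane { z ∈ ℂ : Re z ≥ Δ/(1 + φ²) }, where φ = (1/α)·(2Δ/‖W‖ + (9/8)·‖W‖/Δ). -/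
set_option maxHeartbeats 2000000

lemma spectrum_halfplane {A : Type*} [NormedRing A] [NormedAlgebra ℂ A]
    [CompleteSpace A] [NormOneClass A] (a : A) (c : ℝ)
    (h : ∀ z : ℂ, z.re < c → ∃ κ : ℝ, 0 < κ ∧
      ∀ y : A, κ * ‖y‖ ≤ ‖(algebraMap ℂ A z - a) * y‖) :
    spectrum ℂ a ⊆ {z : ℂ | c ≤ z.re} := by
  haveI : Nontrivial A := ⟨⟨1, 0, by
    intro hcon
    have h1 : ‖(1 : A)‖ = 1 := norm_one
    rw [hcon] at h1; simp at h1⟩⟩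
  intro z₀ hz₀
  by_contra hc
  simp only [Set.mem_setOf_eq, not_le] at hc
  set T : Set ℝ := {t : ℝ | 0 ≤ t ∧ (z₀ - (t : ℂ)) ∈ spectrum ℂ a} with hT
  have hT0 : (0 : ℝ) ∈ T := by simpa [hT] using hz₀
  have hTne : T.Nonempty := ⟨0, hT0⟩
  have hTsub : T ⊆ Set.Icc 0 (‖a‖ + ‖z₀‖) := by
    rintro t ⟨ht0, hts⟩
    refine ⟨ht0, ?_⟩
    have h1 : ‖z₀ - (t : ℂ)‖ ≤ ‖a‖ := spectrum.norm_le_norm_of_mem hts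
    have h2 : ‖(t : ℂ)‖ = ‖(z₀ - (t:ℂ)) - z₀‖ := by
      have : (t:ℂ) = -((z₀ - (t:ℂ)) - z₀) := by ring
      nth_rewrite 1 [this]
      rw [norm_neg]
    have h3 : ‖(z₀ - (t:ℂ)) - z₀‖ ≤ ‖z₀ - (t:ℂ)‖ + ‖z₀‖ := norm_sub_le _ _
    have h4 : ‖(t : ℂ)‖ = |t| := by rw [Complex.norm_real, Real.norm_eq_abs]
    have := le_abs_self t
    linarith
  have hTclosed : IsClosed T := by
    have : T = Set.Ici (0:ℝ) ∩ ((fun t : ℝ => z₀ - (t:ℂ)) ⁻¹' (spectrum ℂ a)) := by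
      ext t; simp [hT, Set.mem_Ici]
    rw [this]
    exact isClosed_Ici.inter ((spectrum.isClosed (𝕜 := ℂ) a).preimage (by continuity))
  have hTcompact : IsCompact T :=
    (isCompact_Icc).of_isClosed_subset hTclosed hTsub
  have htstar : sSup T ∈ T := hTcompact.sSup_mem hTne
  set t₀ := sSup T with ht₀
  obtain ⟨ht₀0, ht₀s⟩ := htstar
  have hre : (z₀ - (t₀ : ℂ)).re < c := by
    simp only [Complex.sub_re, Complex.ofReal_re]
    linarith
  obtain ⟨κ, hκ, hlow⟩ := h _ hre
  set zs : ℂ := z₀ - (t₀ : ℂ) with hzs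
  set δ : ℂ := ((κ/4 : ℝ) : ℂ) with hδ
  set z' : ℂ := zs - δ with hz'
  have hδnorm : ‖δ‖ = κ/4 := by
    rw [hδ, Complex.norm_real, Real.norm_eq_abs, abs_of_pos (by linarith)]
  have hz'ns : z' ∉ spectrum ℂ a := by
    intro hmem
    have hz'eq : z' = z₀ - ((t₀ + κ/4 : ℝ) : ℂ) := by
      rw [hz', hzs, hδ]; push_cast; ring
    rw [hz'eq] at hmem
    have hmemT : (t₀ + κ/4) ∈ T := ⟨by linarith, hmem⟩
    have := le_csSup ⟨‖a‖ + ‖z₀‖, fun x hx => (hTsub hx).2⟩ hmemT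
    linarith
  have hz'unit : IsUnit (algebraMap ℂ A z' - a) := by
    by_contra hnu; exact hz'ns hnu
  obtain ⟨u, hu⟩ := hz'unit
  have hlow' : ∀ y : A, (3*κ/4) * ‖y‖ ≤ ‖(algebraMap ℂ A z' - a) * y‖ := by
    intro y
    have e1 : (algebraMap ℂ A z' - a) * y
        = (algebraMap ℂ A zs - a) * y - (algebraMap ℂ A δ) * y := by
      rw [hz', map_sub]; noncomm_ring
    rw [e1]
    have h2 : ‖(algebraMap ℂ A δ) * y‖ ≤ (κ/4) * ‖y‖ := by
      calc ‖(algebraMap ℂ A δ) * y‖ ≤ ‖algebraMap ℂ A δ‖ * ‖y‖ := norm_mul_le _ _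
        _ ≤ (κ/4) * ‖y‖ := by rw [norm_algebraMap', hδnorm]
    have h3 := hlow y
    calc (3*κ/4) * ‖y‖ = κ * ‖y‖ - (κ/4) * ‖y‖ := by ring
      _ ≤ ‖(algebraMap ℂ A zs - a) * y‖ - ‖(algebraMap ℂ A δ) * y‖ := by
          exact sub_le_sub h3 h2
      _ ≤ ‖(algebraMap ℂ A zs - a) * y - (algebraMap ℂ A δ) * y‖ :=
          norm_sub_norm_le _ _
  have hinv : ‖(↑u⁻¹ : A)‖ ≤ 4/(3*κ) := by
    have h5 := hlow' (↑u⁻¹ : A)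
    rw [← hu] at h5
    rw [Units.mul_inv, norm_one] at h5
    rw [le_div_iff₀ (by positivity)]
    linarith
  have hinvpos : 0 < ‖(↑u⁻¹ : A)‖ := by
    simp only [norm_pos_iff]
    exact u⁻¹.ne_zero
  have hnear : ‖(algebraMap ℂ A zs - a) - ↑u‖ < ‖(↑u⁻¹ : A)‖⁻¹ := by
    rw [hu, sub_sub_sub_cancel_right, ← map_sub]
    have h6 : zs - z' = δ := by rw [hz']; ring
    rw [h6, norm_algebraMap', hδnorm]
    have h7 : (3*κ/4 : ℝ) ≤ ‖(↑u⁻¹ : A)‖⁻¹ := by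
      rw [le_inv_comm₀ (by positivity) hinvpos]
      calc ‖(↑u⁻¹:A)‖ ≤ 4/(3*κ) := hinv
        _ = (3*κ/4)⁻¹ := by rw [inv_div]
    linarith
  exact ht₀s ((u.ofNearby _ hnear).isUnit)

lemma arith_contra (Δ φ C P M κ x n ε a b : ℝ)
    (hΔ : 0 < Δ) (hφ : 0 < φ) (hC : 0 < C)
    (hP : P = 1 + φ ^ 2) (hM : M = P + 2 * φ * C * Δ + C ^ 2 * Δ + 1)
    (hκ : 0 < κ) (hκ1 : κ ≤ 1) (hκM : κ * M ≤ Δ - P * x)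
    (hn : 0 < n) (hεκ : ε < κ * n) (hε0 : 0 ≤ ε)
    (hb0 : 0 ≤ b) (ha0 : 0 ≤ a) (hbn : b ≤ n)
    (hnorm : n ^ 2 = a ^ 2 + b ^ 2)
    (henergy : Δ * b ^ 2 ≤ x * n ^ 2 + n * ε)
    (hsplit : a ≤ φ * b + C * ε) : False := by
  subst hP hM
  have h1 : n ^ 2 ≤ (1 + φ ^ 2) * b ^ 2 + 2 * φ * C * ε * b + C ^ 2 * ε ^ 2 := by
    linarith only [hnorm, mul_self_le_mul_self ha0 hsplit]
  have c1 : n * ε ≤ κ * n ^ 2 := by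
    linarith only [mul_le_mul_of_nonneg_left hεκ.le hn.le]
  have c2 : ε * b ≤ κ * n ^ 2 := by
    linarith only [mul_le_mul_of_nonneg_left hbn hε0, c1]
  have c3 : ε ^ 2 ≤ κ * n ^ 2 := by
    linarith only [mul_self_le_mul_self hε0 hεκ.le,
      mul_le_mul_of_nonneg_right hκ1 (mul_nonneg hκ.le (sq_nonneg n))]
  have c4 : Δ * n ^ 2 ≤ (1 + φ ^ 2) * x * n ^ 2
      + ((1 + φ ^ 2) + 2 * φ * C * Δ + C ^ 2 * Δ) * (κ * n ^ 2) := by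
    have d1 := mul_le_mul_of_nonneg_left h1 hΔ.le
    have d2 := mul_le_mul_of_nonneg_left henergy (by positivity : (0:ℝ) ≤ 1 + φ ^ 2)
    have d3 := mul_le_mul_of_nonneg_left c1 (by positivity : (0:ℝ) ≤ 1 + φ ^ 2)
    have d4 := mul_le_mul_of_nonneg_left c2 (by positivity : (0:ℝ) ≤ 2 * φ * C * Δ)
    have d5 := mul_le_mul_of_nonneg_left c3 (by positivity : (0:ℝ) ≤ C ^ 2 * Δ)
    linarith only [d1, d2, d3, d4, d5]
  have c5 := mul_le_mul_of_nonneg_right hκM (sq_nonneg n)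
  linarith only [c4, c5, mul_pos hκ (pow_pos hn 2)]

/-- Spectrum of the block operator `L(f₀,f₁) = (−W† f₁, W f₀ + A f₁)` on the
Hilbert direct sum `H₀ ⊕₂ H₁` is contained in `{Re z ≥ Δ/(1+φ²)}` with
`φ = (1/α)(2Δ/‖W‖ + (9/8)‖W‖/Δ)`. -/
theorem stmt_1 {H₀ H₁ : Type*}
    [NormedAddCommGroup H₀] [InnerProductSpace ℂ H₀] [CompleteSpace H₀]
    [NormedAddCommGroup H₁] [InnerProductSpace ℂ H₁] [CompleteSpace H₁]
    (W : H₀ →L[ℂ] H₁) (hW : W ≠ 0)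
    (A : H₁ →L[ℂ] H₁) (Δ : ℝ) (hΔ : 0 < Δ)
    (hA : ∀ f : H₁, Δ * ‖f‖ ^ 2 ≤ ((inner ℂ f (A f) : ℂ)).re)
    (Ainv : H₁ →L[ℂ] H₁)
    (hA1 : A.comp Ainv = ContinuousLinearMap.id ℂ H₁)
    (hA2 : Ainv.comp A = ContinuousLinearMap.id ℂ H₁)
    (α : ℝ) (hα : 0 < α)
    (hlow : ∀ f : H₀, α * (‖W‖ / Δ) * ‖f‖ ≤ ‖Ainv (W f)‖)
    (L : WithLp 2 (H₀ × H₁) →L[ℂ] WithLp 2 (H₀ × H₁))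
    (hL : ∀ f : WithLp 2 (H₀ × H₁),
      WithLp.equiv 2 (H₀ × H₁) (L f) =
        (-(ContinuousLinearMap.adjoint W) ((WithLp.equiv 2 (H₀ × H₁) f).2),
          W ((WithLp.equiv 2 (H₀ × H₁) f).1) + A ((WithLp.equiv 2 (H₀ × H₁) f).2))) :
    spectrum ℂ L ⊆
      {z : ℂ | Δ / (1 + ((1 / α) * (2 * Δ / ‖W‖ + (9 / 8) * (‖W‖ / Δ))) ^ 2) ≤ z.re} := by
  have hWn : (0:ℝ) < ‖W‖ := norm_pos_iff.mpr hW
  set φ : ℝ := (1 / α) * (2 * Δ / ‖W‖ + (9 / 8) * (‖W‖ / Δ)) with hφdef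
  have hφ : 0 < φ := by
    apply mul_pos (by positivity)
    positivity
  -- A⁻¹ bound
  have hS1 : ∀ h : H₁, Δ * ‖Ainv h‖ ≤ ‖h‖ := by
    intro h
    have hA1h : A (Ainv h) = h := by
      have := ContinuousLinearMap.ext_iff.mp hA1 h
      simpa using this
    have e1 : Δ * ‖Ainv h‖ ^ 2 ≤ ((inner ℂ (Ainv h) (A (Ainv h)) : ℂ)).re := hA (Ainv h)
    rw [hA1h] at e1
    have e2 : ((inner ℂ (Ainv h) h : ℂ)).re ≤ ‖Ainv h‖ * ‖h‖ := by
      have := re_inner_le_norm (𝕜 := ℂ) (Ainv h) h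
      simpa using this
    rcases eq_or_lt_of_le (norm_nonneg (Ainv h)) with h0 | h0
    · rw [← h0]; simpa using norm_nonneg h
    · nlinarith only [e1, e2, h0]
  -- α ≤ 1
  have hα1 : α ≤ 1 := by
    obtain ⟨f, hf⟩ : ∃ f : H₀, W f ≠ 0 := by
      by_contra hcon
      push_neg at hcon
      exact hW (ContinuousLinearMap.ext fun f => by simpa using hcon f)
    have hfn : (0:ℝ) < ‖f‖ := by
      rw [norm_pos_iff]
      intro h0
      exact hf (by rw [h0]; simp)
    have e1 := hlow f
    have e2 := hS1 (W f)
    have e3 : ‖W f‖ ≤ ‖W‖ * ‖f‖ := W.le_opNorm f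
    have e1' : α * ‖W‖ * ‖f‖ ≤ Δ * ‖Ainv (W f)‖ := by
      have h5 := mul_le_mul_of_nonneg_left e1 hΔ.le
      calc α * ‖W‖ * ‖f‖ = Δ * (α * (‖W‖ / Δ) * ‖f‖) := by field_simp
        _ ≤ Δ * ‖Ainv (W f)‖ := h5
    nlinarith only [e1', e2, e3, mul_pos hWn hfn]
  -- key inequalities about φ
  have hαφ : α * φ = 2 * Δ / ‖W‖ + (9 / 8) * (‖W‖ / Δ) := by
    rw [hφdef]
    field_simp
  have hφW : ‖W‖ ≤ φ * Δ := by
    have h1 : ‖W‖ ≤ α * φ * Δ := by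
      have key : α * φ * Δ = 2 * Δ ^ 2 / ‖W‖ + 9/8 * ‖W‖ := by
        rw [hαφ]
        field_simp
      rw [key]
      have hpos : (0:ℝ) ≤ 2 * Δ ^ 2 / ‖W‖ := by positivity
      linarith
    calc ‖W‖ ≤ α * φ * Δ := h1
      _ ≤ 1 * φ * Δ := by
          apply mul_le_mul_of_nonneg_right _ hΔ.le
          exact mul_le_mul_of_nonneg_right hα1 hφ.le
      _ = φ * Δ := by ring
  have h2Δ : 2 * Δ ≤ α * φ * ‖W‖ := by
    have key : α * φ * ‖W‖ = 2 * Δ + 9/8 * ‖W‖ ^ 2 / Δ := by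
      rw [hαφ]
      field_simp
    rw [key]
    have hpos : (0:ℝ) ≤ 9/8 * ‖W‖ ^ 2 / Δ := by positivity
    linarith
  -- nontriviality
  obtain ⟨f₀0, hf₀0⟩ : ∃ f : H₀, f ≠ 0 := by
    obtain ⟨f, hf⟩ : ∃ f : H₀, W f ≠ 0 := by
      by_contra hcon
      push_neg at hcon
      exact hW (ContinuousLinearMap.ext fun f => by simpa using hcon f)
    exact ⟨f, fun h0 => hf (by rw [h0]; simp)⟩
  haveI : Nontrivial (WithLp 2 (H₀ × H₁)) := by
    refine ⟨⟨(WithLp.equiv 2 (H₀ × H₁)).symm (f₀0, 0), 0, ?_⟩⟩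
    intro hcon
    apply hf₀0
    have := congrArg (fun x => (WithLp.equiv 2 (H₀ × H₁) x).1) hcon
    simpa using this
  -- apply the abstract lemma
  apply spectrum_halfplane
  intro z hz
  -- pointwise coercivity
  set C : ℝ := φ / ‖W‖ + 1 / (α * ‖W‖) with hCdef
  have hC : 0 < C := by positivity
  set P : ℝ := 1 + φ ^ 2 with hPdef
  have hP : 0 < P := by positivity
  set M : ℝ := P + 2 * φ * C * Δ + C ^ 2 * Δ + 1 with hMdef
  have hM : 0 < M := by positivity
  have hDpos : 0 < Δ - P * z.re := by
    nlinarith only [(lt_div_iff₀ hP).mp hz]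
  set κ : ℝ := min 1 ((Δ - P * z.re) / M) with hκdef
  have hκ : 0 < κ := lt_min one_pos (by positivity)
  have hκ1 : κ ≤ 1 := min_le_left _ _
  have hκM : κ * M ≤ Δ - P * z.re := by
    have := min_le_right (1:ℝ) ((Δ - P * z.re) / M)
    calc κ * M ≤ ((Δ - P * z.re) / M) * M := by
          apply mul_le_mul_of_nonneg_right this hM.le
      _ = Δ - P * z.re := by field_simp
  refine ⟨κ, hκ, ?_⟩
  -- first prove the pointwise bound
  have hpt : ∀ F : WithLp 2 (H₀ × H₁), κ * ‖F‖ ≤ ‖L F - z • F‖ := by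
    intro F
    by_contra hcon
    push_neg at hcon
    set G : WithLp 2 (H₀ × H₁) := L F - z • F with hGdef
    have hn : 0 < ‖F‖ := by
      rcases (norm_nonneg F).eq_or_lt with h0 | h0
      · exfalso
        rw [← h0, mul_zero] at hcon
        exact (norm_nonneg _).not_gt hcon
      · exact h0
    set f₀ : H₀ := (WithLp.equiv 2 (H₀ × H₁) F).1 with hf₀def
    set f₁ : H₁ := (WithLp.equiv 2 (H₀ × H₁) F).2 with hf₁def
    set g₀ : H₀ := (WithLp.equiv 2 (H₀ × H₁) G).1 with hg₀def
    set g₁ : H₁ := (WithLp.equiv 2 (H₀ × H₁) G).2 with hg₁def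
    set n : ℝ := ‖F‖ with hndef
    set ε : ℝ := ‖G‖ with hεdef
    have hεκ : ε < κ * n := hcon
    have hε0 : 0 ≤ ε := norm_nonneg G
    -- component equations
    have hG0 : g₀ = -((ContinuousLinearMap.adjoint W) f₁) - z • f₀ := by
      rw [hg₀def, hGdef, WithLp.equiv_apply, WithLp.ofLp_sub, WithLp.ofLp_smul, ← WithLp.equiv_apply, hL F]
      simp [hf₀def, hf₁def]
    have hG1 : g₁ = W f₀ + A f₁ - z • f₁ := by
      rw [hg₁def, hGdef, WithLp.equiv_apply, WithLp.ofLp_sub, WithLp.ofLp_smul, ← WithLp.equiv_apply, hL F]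
      simp [hf₀def, hf₁def]
    -- norm identities
    have hFnorm : n ^ 2 = ‖f₀‖ ^ 2 + ‖f₁‖ ^ 2 := by
      rw [hndef, WithLp.prod_norm_sq_eq_of_L2, hf₀def, hf₁def,
        WithLp.equiv_apply, WithLp.ofLp_fst, WithLp.ofLp_snd]
    have hGnorm : ε ^ 2 = ‖g₀‖ ^ 2 + ‖g₁‖ ^ 2 := by
      rw [hεdef, WithLp.prod_norm_sq_eq_of_L2, hg₀def, hg₁def,
        WithLp.equiv_apply, WithLp.ofLp_fst, WithLp.ofLp_snd]
    have hg₀ε : ‖g₀‖ ≤ ε := by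
      have hsq : ‖g₀‖ ^ 2 ≤ ε ^ 2 := by linarith only [hGnorm, sq_nonneg ‖g₁‖]
      exact (pow_le_pow_iff_left₀ (norm_nonneg g₀) hε0 two_ne_zero).mp hsq
    have hg₁ε : ‖g₁‖ ≤ ε := by
      have hsq : ‖g₁‖ ^ 2 ≤ ε ^ 2 := by linarith only [hGnorm, sq_nonneg ‖g₀‖]
      exact (pow_le_pow_iff_left₀ (norm_nonneg g₁) hε0 two_ne_zero).mp hsq
    have hf₁n : ‖f₁‖ ≤ n := by
      have hsq : ‖f₁‖ ^ 2 ≤ n ^ 2 := by linarith only [hFnorm, sq_nonneg ‖f₀‖]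
      exact (pow_le_pow_iff_left₀ (norm_nonneg f₁) hn.le two_ne_zero).mp hsq
    -- energy estimate
    have energy : Δ * ‖f₁‖ ^ 2 ≤ z.re * n ^ 2 + n * ε := by
      have hFG : (inner ℂ F G : ℂ) = inner ℂ f₀ g₀ + inner ℂ f₁ g₁ := by
        rw [WithLp.prod_inner_apply, hf₀def, hf₁def, hg₀def, hg₁def,
          WithLp.equiv_apply, WithLp.equiv_apply]
      have i0 : (inner ℂ f₀ g₀ : ℂ)
          = -(inner ℂ (W f₀) f₁) - z * inner ℂ f₀ f₀ := by
        rw [hG0, inner_sub_right, inner_neg_right, inner_smul_right,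
          ContinuousLinearMap.adjoint_inner_right]
      have i1 : (inner ℂ f₁ g₁ : ℂ)
          = inner ℂ f₁ (W f₀) + inner ℂ f₁ (A f₁) - z * inner ℂ f₁ f₁ := by
        rw [hG1, inner_sub_right, inner_add_right, inner_smul_right]
      have hconj' : ((inner ℂ f₁ (W f₀) : ℂ)).re = ((inner ℂ (W f₀) f₁ : ℂ)).re := by
        have := inner_re_symm (𝕜 := ℂ) f₁ (W f₀)
        simpa [RCLike.re_to_complex] using this
      have w0re : ((inner ℂ f₀ f₀ : ℂ)).re = ‖f₀‖ ^ 2 := by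
        have := inner_self_eq_norm_sq (𝕜 := ℂ) f₀
        simpa [RCLike.re_to_complex] using this
      have w0im : ((inner ℂ f₀ f₀ : ℂ)).im = 0 := inner_self_im (𝕜 := ℂ) f₀
      have w1re : ((inner ℂ f₁ f₁ : ℂ)).re = ‖f₁‖ ^ 2 := by
        have := inner_self_eq_norm_sq (𝕜 := ℂ) f₁
        simpa [RCLike.re_to_complex] using this
      have w1im : ((inner ℂ f₁ f₁ : ℂ)).im = 0 := inner_self_im (𝕜 := ℂ) f₁
      have r0 : ((inner ℂ f₀ g₀ : ℂ)).re
          = -((inner ℂ (W f₀) f₁ : ℂ)).re - z.re * ‖f₀‖ ^ 2 := by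
        rw [i0]
        simp only [Complex.sub_re, Complex.neg_re, Complex.mul_re, w0re, w0im]
        ring
      have r1 : ((inner ℂ f₁ g₁ : ℂ)).re
          = ((inner ℂ (W f₀) f₁ : ℂ)).re + ((inner ℂ f₁ (A f₁) : ℂ)).re - z.re * ‖f₁‖ ^ 2 := by
        rw [i1]
        simp only [Complex.sub_re, Complex.add_re, Complex.mul_re, w1re, w1im, hconj']
        ring
      have hre : ((inner ℂ F G : ℂ)).re
          = ((inner ℂ f₁ (A f₁) : ℂ)).re - z.re * (‖f₀‖ ^ 2 + ‖f₁‖ ^ 2) := by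
        rw [hFG, Complex.add_re, r0, r1]
        ring
      have hub : ((inner ℂ F G : ℂ)).re ≤ n * ε := by
        have := re_inner_le_norm (𝕜 := ℂ) F G
        simpa using this
      rw [hre] at hub
      have hz2 : z.re * n ^ 2 = z.re * (‖f₀‖ ^ 2 + ‖f₁‖ ^ 2) := by rw [hFnorm]
      linarith only [hub, hA f₁, hz2]
    -- splitting estimate:  ‖f₀‖ ≤ φ * ‖f₁‖ + C * ε
    have hadj : ‖(ContinuousLinearMap.adjoint W) f₁‖ ≤ ‖W‖ * ‖f₁‖ := by
      calc ‖(ContinuousLinearMap.adjoint W) f₁‖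
          ≤ ‖ContinuousLinearMap.adjoint W‖ * ‖f₁‖ :=
            (ContinuousLinearMap.adjoint W).le_opNorm f₁
        _ = ‖W‖ * ‖f₁‖ := by
            rw [LinearIsometryEquiv.norm_map ContinuousLinearMap.adjoint W]
    have hsplit : ‖f₀‖ ≤ φ * ‖f₁‖ + C * ε := by
      rcases le_or_gt ‖W‖ (‖z‖ * φ) with hcase | hcase
      · -- large |z| : use the first equation
        have e1 : z • f₀ = -((ContinuousLinearMap.adjoint W) f₁) - g₀ := by
          rw [hG0]; abel
        have e2 : ‖z‖ * ‖f₀‖ ≤ ‖W‖ * ‖f₁‖ + ε := by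
          calc ‖z‖ * ‖f₀‖ = ‖z • f₀‖ := (norm_smul z f₀).symm
            _ ≤ ‖(ContinuousLinearMap.adjoint W) f₁‖ + ‖g₀‖ := by
                rw [e1]
                calc ‖-((ContinuousLinearMap.adjoint W) f₁) - g₀‖
                    ≤ ‖-((ContinuousLinearMap.adjoint W) f₁)‖ + ‖g₀‖ := norm_sub_le _ _
                  _ = ‖(ContinuousLinearMap.adjoint W) f₁‖ + ‖g₀‖ := by rw [norm_neg]
            _ ≤ ‖W‖ * ‖f₁‖ + ε := add_le_add hadj hg₀ε
        -- multiply by φ and use ‖W‖ ≤ ‖z‖φ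
        have e3 : ‖W‖ * ‖f₀‖ ≤ ‖z‖ * φ * ‖f₀‖ :=
          mul_le_mul_of_nonneg_right hcase (norm_nonneg f₀)
        have e4 : ‖z‖ * φ * ‖f₀‖ ≤ φ * (‖W‖ * ‖f₁‖ + ε) := by
          calc ‖z‖ * φ * ‖f₀‖ = φ * (‖z‖ * ‖f₀‖) := by ring
            _ ≤ φ * (‖W‖ * ‖f₁‖ + ε) := mul_le_mul_of_nonneg_left e2 hφ.le
        have e5 : ‖f₀‖ ≤ φ * ‖f₁‖ + φ / ‖W‖ * ε := by
          rw [← mul_le_mul_iff_right₀ hWn]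
          calc ‖W‖ * ‖f₀‖ ≤ φ * (‖W‖ * ‖f₁‖ + ε) := le_trans e3 e4
            _ = ‖W‖ * (φ * ‖f₁‖ + φ / ‖W‖ * ε) := by field_simp
        calc ‖f₀‖ ≤ φ * ‖f₁‖ + φ / ‖W‖ * ε := e5
          _ ≤ φ * ‖f₁‖ + C * ε := by
              have : φ / ‖W‖ ≤ C := by
                rw [hCdef]
                have : (0:ℝ) ≤ 1 / (α * ‖W‖) := by positivity
                linarith
              exact add_le_add_right (mul_le_mul_of_nonneg_right this hε0) _
      · -- small |z| : use the second equation and hlow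
        have hzΔ : ‖z‖ ≤ Δ := by
          have h6 : ‖z‖ * φ ≤ Δ * φ := by
            calc ‖z‖ * φ ≤ ‖W‖ := hcase.le
              _ ≤ φ * Δ := hφW
              _ = Δ * φ := by ring
          exact le_of_mul_le_mul_right h6 hφ
        have e1 : Ainv (W f₀) = Ainv g₁ - f₁ + z • Ainv f₁ := by
          have h1 : W f₀ = g₁ - A f₁ + z • f₁ := by rw [hG1]; abel
          have h2 : Ainv (A f₁) = f₁ := by
            have := ContinuousLinearMap.ext_iff.mp hA2 f₁
            simpa using this
          rw [h1]
          rw [map_add, map_sub, map_smul, h2]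
        have e2 : ‖Ainv (W f₀)‖ ≤ ε / Δ + ‖f₁‖ + ‖f₁‖ := by
          calc ‖Ainv (W f₀)‖ ≤ ‖Ainv g₁ - f₁‖ + ‖z • Ainv f₁‖ := by
                rw [e1]; exact norm_add_le _ _
            _ ≤ ‖Ainv g₁‖ + ‖f₁‖ + ‖z‖ * ‖Ainv f₁‖ := by
                rw [norm_smul]
                exact add_le_add_left (norm_sub_le _ _) _
            _ ≤ ε / Δ + ‖f₁‖ + ‖f₁‖ := by
                have h3 : ‖Ainv g₁‖ ≤ ε / Δ := by
                  rw [le_div_iff₀ hΔ]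
                  calc ‖Ainv g₁‖ * Δ = Δ * ‖Ainv g₁‖ := by ring
                    _ ≤ ‖g₁‖ := hS1 g₁
                    _ ≤ ε := hg₁ε
                have h4 : ‖z‖ * ‖Ainv f₁‖ ≤ ‖f₁‖ := by
                  calc ‖z‖ * ‖Ainv f₁‖ ≤ Δ * ‖Ainv f₁‖ :=
                        mul_le_mul_of_nonneg_right hzΔ (norm_nonneg _)
                    _ ≤ ‖f₁‖ := hS1 f₁
                exact add_le_add (add_le_add h3 (le_refl _)) h4
        have e3 : α * (‖W‖ / Δ) * ‖f₀‖ ≤ ε / Δ + 2 * ‖f₁‖ := by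
          calc α * (‖W‖ / Δ) * ‖f₀‖ ≤ ‖Ainv (W f₀)‖ := hlow f₀
            _ ≤ ε / Δ + ‖f₁‖ + ‖f₁‖ := e2
            _ = ε / Δ + 2 * ‖f₁‖ := by ring
        -- multiply by Δ
        have e4 : α * ‖W‖ * ‖f₀‖ ≤ ε + 2 * Δ * ‖f₁‖ := by
          have := mul_le_mul_of_nonneg_left e3 hΔ.le
          calc α * ‖W‖ * ‖f₀‖ = Δ * (α * (‖W‖/Δ) * ‖f₀‖) := by field_simp
            _ ≤ Δ * (ε / Δ + 2 * ‖f₁‖) := this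
            _ = ε + 2 * Δ * ‖f₁‖ := by field_simp
        have e5 : α * ‖W‖ * ‖f₀‖ ≤ ε + α * φ * ‖W‖ * ‖f₁‖ := by
          calc α * ‖W‖ * ‖f₀‖ ≤ ε + 2 * Δ * ‖f₁‖ := e4
            _ ≤ ε + α * φ * ‖W‖ * ‖f₁‖ := by
                have := mul_le_mul_of_nonneg_right h2Δ (norm_nonneg f₁)
                linarith
        have hαW : (0:ℝ) < α * ‖W‖ := by positivity
        have e6 : α * ‖W‖ * ‖f₀‖ ≤ α * ‖W‖ * (φ * ‖f₁‖ + C * ε) := by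
          have hCge : 1 ≤ α * ‖W‖ * C := by
            rw [hCdef]
            have h7 : α * ‖W‖ * (φ/‖W‖ + 1/(α*‖W‖)) = α * φ + 1 := by
              field_simp
            rw [h7]
            linarith only [mul_pos hα hφ]
          have e7 : α * ‖W‖ * (φ * ‖f₁‖ + C * ε) = α * φ * ‖W‖ * ‖f₁‖ + (α * ‖W‖ * C) * ε := by
            ring
          rw [e7]
          linarith only [e5, mul_le_mul_of_nonneg_right hCge hε0]
        exact le_of_mul_le_mul_left e6 hαW
    -- final contradiction
    exact arith_contra Δ φ C P M κ z.re n ε ‖f₀‖ ‖f₁‖ hΔ hφ hC hPdef hMdef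
      hκ hκ1 hκM hn hεκ hε0 (norm_nonneg f₁) (norm_nonneg f₀) hf₁n hFnorm energy hsplit
  -- convert pointwise bound to the algebra bound
  intro y
  have hop : ∀ G : WithLp 2 (H₀ × H₁),
      κ * ‖y G‖ ≤ ‖(algebraMap ℂ (WithLp 2 (H₀ × H₁) →L[ℂ] WithLp 2 (H₀ × H₁)) z - L) * y‖ * ‖G‖ := by
    intro G
    have h1 : κ * ‖y G‖ ≤ ‖L (y G) - z • (y G)‖ := hpt (y G)
    have h2 : ((algebraMap ℂ (WithLp 2 (H₀ × H₁) →L[ℂ] WithLp 2 (H₀ × H₁)) z - L) * y) G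
        = z • (y G) - L (y G) := by
      simp [Algebra.algebraMap_eq_smul_one, ContinuousLinearMap.mul_apply,
        ContinuousLinearMap.sub_apply, ContinuousLinearMap.smul_apply]
    calc κ * ‖y G‖ ≤ ‖L (y G) - z • (y G)‖ := h1
      _ = ‖((algebraMap ℂ _ z - L) * y) G‖ := by rw [h2, norm_sub_rev]
      _ ≤ ‖(algebraMap ℂ _ z - L) * y‖ * ‖G‖ := ContinuousLinearMap.le_opNorm _ _
  have := ContinuousLinearMap.opNorm_le_bound y
    (M := ‖(algebraMap ℂ _ z - L) * y‖ / κ) (by positivity) (fun G => by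
      rw [div_mul_eq_mul_div, le_div_iff₀ hκ]
      calc ‖y G‖ * κ = κ * ‖y G‖ := by ring
        _ ≤ ‖(algebraMap ℂ _ z - L) * y‖ * ‖G‖ := hop G)
  calc κ * ‖y‖ ≤ κ * (‖(algebraMap ℂ _ z - L) * y‖ / κ) :=
        mul_le_mul_of_nonneg_left this hκ.le
    _ = ‖(algebraMap ℂ _ z - L) * y‖ := by field_simp
end

section
/- Let H₀ and H₁ be complex Hilbert spaces, let W : H₀ →L[ℂ] H₁ be a nonzero bounded linear map, and let A : H₁ →L[ℂ] H₁ be a bounded operator satisfying Re ⟨f, A f⟩ ≥ Δ ‖f‖² for all f ∈ H₁, where Δ > 0 (in particular A is boundedly invertible). Suppose there is α > 0 such that ‖A⁻¹ (W f)‖ ≥ α (‖W‖/Δ) ‖f‖ for all f ∈ H₀. Let L be the bounded operator on H₀ ⊕ H₁ given by L(f₀, f₁) = (−W† f₁, W f₀ + A f₁), and set γ₀ = Δ/(1 + φ²) with φ = (1/α)·(2Δ/‖W‖ + (9/8)·‖W‖/Δ). Then there exists a finite constant C such that for every z ∈ ℂ with Re z < γ₀, the operator L − z·I is boundedly invertible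 and ‖(L − zI)⁻¹‖ ≤ C/(γ₀ − Re z). -/
set_option maxHeartbeats 1000000 in
/-- Pure real-arithmetic core of the resolvent estimate. -/
private lemma stmt2_aux_arith (Δ γ₀ φ c K C₀ x na nb nF nG : ℝ)
    (hγpos : 0 < γ₀) (hφpos : 0 < φ) (hcpos : 0 < c)
    (hγΔ : γ₀ * (1 + φ ^ 2) = Δ)
    (hK : K = 2 * φ * c + c ^ 2)
    (hC₀ : C₀ = 1 + γ₀ + γ₀ * (2 * K + 1))
    (hna : 0 ≤ na) (hnb : 0 ≤ nb) (hnF : 0 ≤ nF) (hnG : 0 ≤ nG)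
    (hnF2 : nF ^ 2 = na ^ 2 + nb ^ 2)
    (hx : x < γ₀)
    (hAineq : Δ * nb ^ 2 ≤ nF * nG + x * nF ^ 2)
    (hneg : -x * nF ^ 2 ≤ nF * nG)
    (hBnd : na ≤ φ * nb + c * nG) :
    (γ₀ - x) * nF ≤ C₀ * nG := by
  have hKpos : 0 < K := by rw [hK]; positivity
  have hC₀pos : 0 < C₀ := by rw [hC₀]; positivity
  have hble : nb ≤ nF := by nlinarith
  have hsq : (γ₀ - x) * nF ^ 2 ≤ C₀ * (nF * nG) := by
    have t1 : (0:ℝ) ≤ c ^ 2 * (nF * nG) := by positivity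
    have t2 : (0:ℝ) ≤ 2 * φ * c * nG ^ 2 := by positivity
    have ha2 : na ^ 2 ≤ φ ^ 2 * nb ^ 2 + K * (nF * nG + nG ^ 2) := by
      have h1 : na ^ 2 ≤ (φ * nb + c * nG) ^ 2 := by nlinarith
      have h2 : 2 * φ * c * (nb * nG) ≤ 2 * φ * c * (nF * nG) := by
        apply mul_le_mul_of_nonneg_left _ (by positivity)
        exact mul_le_mul_of_nonneg_right hble hnG
      calc na ^ 2 ≤ (φ * nb + c * nG) ^ 2 := h1
        _ = φ ^ 2 * nb ^ 2 + 2 * φ * c * (nb * nG) + c ^ 2 * nG ^ 2 := by ring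
        _ ≤ φ ^ 2 * nb ^ 2 + 2 * φ * c * (nF * nG) + c ^ 2 * nG ^ 2 := by linarith
        _ ≤ φ ^ 2 * nb ^ 2 + K * (nF * nG + nG ^ 2) := by rw [hK]; nlinarith
    have hF2 : nF ^ 2 ≤ (1 + φ ^ 2) * nb ^ 2 + K * (nF * nG + nG ^ 2) := by
      rw [hnF2]; nlinarith
    have hmain : (γ₀ - x) * nF ^ 2 ≤ (1 + γ₀ * K) * (nF * nG) + γ₀ * K * nG ^ 2 := by
      have h1 : γ₀ * nF ^ 2 ≤ γ₀ * ((1 + φ ^ 2) * nb ^ 2 + K * (nF * nG + nG ^ 2)) :=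
        mul_le_mul_of_nonneg_left hF2 hγpos.le
      have h2 : γ₀ * ((1 + φ ^ 2) * nb ^ 2 + K * (nF * nG + nG ^ 2))
          = Δ * nb ^ 2 + γ₀ * K * (nF * nG) + γ₀ * K * nG ^ 2 := by
        rw [← hγΔ]; ring
      rw [h2] at h1
      nlinarith
    rcases le_or_gt nG nF with hGF | hFG
    · have hGG : nG ^ 2 ≤ nF * nG := by nlinarith
      have h3 : (0:ℝ) ≤ γ₀ * K * (nF * nG - nG ^ 2) :=
        mul_nonneg (by positivity) (by linarith)
      have h4 : (0:ℝ) ≤ (γ₀ + γ₀) * (nF * nG) := by positivity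
      rw [hC₀]
      nlinarith
    · have hFFG : nF ^ 2 ≤ nF * nG := by nlinarith
      have hfgnn : (0:ℝ) ≤ nF * nG := by positivity
      rcases le_or_gt 0 x with hx0 | hx0
      · have h1 : (γ₀ - x) * nF ^ 2 ≤ γ₀ * nF ^ 2 := by nlinarith [sq_nonneg nF]
        have h2 : γ₀ * nF ^ 2 ≤ γ₀ * (nF * nG) := mul_le_mul_of_nonneg_left hFFG hγpos.le
        have hC : γ₀ * (nF * nG) ≤ C₀ * (nF * nG) := by
          apply mul_le_mul_of_nonneg_right _ hfgnn
          rw [hC₀]; nlinarith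
        linarith
      · have h2 : γ₀ * nF ^ 2 ≤ γ₀ * (nF * nG) := mul_le_mul_of_nonneg_left hFFG hγpos.le
        have hC : (γ₀ + 1) * (nF * nG) ≤ C₀ * (nF * nG) := by
          apply mul_le_mul_of_nonneg_right _ hfgnn
          rw [hC₀]; nlinarith
        nlinarith
  rcases eq_or_lt_of_le hnF with hF0 | hFpos
  · rw [← hF0]
    have : (0:ℝ) ≤ C₀ * nG := by positivity
    linarith
  · have h2 : ((γ₀ - x) * nF) * nF ≤ (C₀ * nG) * nF := by nlinarith
    exact le_of_mul_le_mul_right h2 hFpos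

set_option maxHeartbeats 1000000 in
/-- Propagation of invertibility from far left to the whole half plane,
given a uniform bound on inverses. -/
private lemma stmt2_aux_units {𝒜 : Type*} [NormedRing 𝒜] [NormedAlgebra ℂ 𝒜]
    [CompleteSpace 𝒜] [NormOneClass 𝒜] (L : 𝒜) (γ₀ C₀ : ℝ) (hC₀ : 0 < C₀)
    (bound : ∀ z : ℂ, z.re < γ₀ → ∀ u : 𝒜ˣ, (u : 𝒜) = L - z • 1 →
      ‖((u⁻¹ : 𝒜ˣ) : 𝒜)‖ ≤ C₀ / (γ₀ - z.re)) :
    ∀ z : ℂ, z.re < γ₀ → IsUnit (L - z • 1) := by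
  have hnt : Nontrivial 𝒜 := ⟨1, 0, fun h => by simpa [h] using (norm_one (α := 𝒜))⟩
  intro z hz
  have hzpos : 0 < γ₀ - z.re := by linarith
  set d : ℝ := (γ₀ - z.re) / (2 * C₀) with hd
  have hdpos : 0 < d := by positivity
  obtain ⟨N, hN⟩ := exists_nat_gt ((‖L‖ + ‖z‖) / d)
  have hNd : ‖L‖ + ‖z‖ < N * d := by
    rw [div_lt_iff₀ hdpos] at hN; linarith
  have key : ∀ j : ℕ, j ≤ N →
      IsUnit (L - (z - ((((N - j : ℕ) : ℝ) * d : ℝ) : ℂ)) • 1) := by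
    intro j
    induction j with
    | zero =>
      intro _
      set ζ : ℂ := z - ((((N - 0 : ℕ) : ℝ) * d : ℝ) : ℂ) with hζ
      have habs : ‖L‖ < ‖ζ‖ := by
        have h1 : ‖((((N - 0 : ℕ) : ℝ) * d : ℝ) : ℂ)‖ - ‖z‖ ≤ ‖ζ‖ := by
          rw [hζ, norm_sub_rev]
          exact norm_sub_norm_le _ _
        have h2 : ‖((((N - 0 : ℕ) : ℝ) * d : ℝ) : ℂ)‖ = (N : ℝ) * d := by
          simp only [Nat.sub_zero]
          rw [Complex.norm_real, Real.norm_eq_abs, abs_of_nonneg (by positivity)]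
        rw [h2] at h1
        have h3 : ‖z‖ = ‖z‖ := rfl
        linarith
      have hunit : IsUnit (algebraMap ℂ 𝒜 ζ - L) := by
        by_contra hcon
        have hmem : ζ ∈ spectrum ℂ L := spectrum.mem_iff.mpr hcon
        have := spectrum.norm_le_norm_of_mem hmem
        linarith
      have heq : L - ζ • 1 = -(algebraMap ℂ 𝒜 ζ - L) := by
        rw [Algebra.algebraMap_eq_smul_one]; abel
      rw [heq]
      exact hunit.neg
    | succ j ih =>
      intro hj
      have hjN : j ≤ N := le_of_lt hj
      obtain ⟨u, hu⟩ := ih hjN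
      set m : ℝ := ((N - (j + 1) : ℕ) : ℝ) * d with hm
      have hm0 : 0 ≤ m := by positivity
      have hmm : ((N - j : ℕ) : ℝ) * d = m + d := by
        have hnat : N - j = (N - (j + 1)) + 1 := by omega
        rw [hm, hnat]; push_cast; ring
      set w : ℂ := z - (m : ℂ) with hw
      have hwre : w.re = z.re - m := by simp [hw]
      have hwlt : w.re < γ₀ := by rw [hwre]; linarith
      have hw' : z - ((((N - j : ℕ) : ℝ) * d : ℝ) : ℂ) = w - (d : ℂ) := by
        rw [hw, hmm]; push_cast; ring
      rw [hw'] at hu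
      have hw're : (w - (d : ℂ)).re = z.re - m - d := by simp [hw]
      have hw'lt : (w - (d : ℂ)).re < γ₀ := by rw [hw're]; linarith
      have hbnd : ‖((u⁻¹ : 𝒜ˣ) : 𝒜)‖ ≤ C₀ / (γ₀ - (w - (d : ℂ)).re) :=
        bound _ hw'lt u hu
      have hden : 2 * C₀ * d ≤ γ₀ - (w - (d : ℂ)).re := by
        rw [hw're]
        have e : 2 * C₀ * d = γ₀ - z.re := by rw [hd]; field_simp
        linarith
      have hbnd2 : ‖((u⁻¹ : 𝒜ˣ) : 𝒜)‖ ≤ 1 / (2 * d) := by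
        refine hbnd.trans ?_
        rw [div_le_div_iff₀ (by linarith) (by positivity)]
        nlinarith
      have hinvpos : 0 < ‖((u⁻¹ : 𝒜ˣ) : 𝒜)‖ := Units.norm_pos _
      have hdinv : d < ‖((u⁻¹ : 𝒜ˣ) : 𝒜)‖⁻¹ := by
        have h1 : (1 / (2 * d))⁻¹ ≤ ‖((u⁻¹ : 𝒜ˣ) : 𝒜)‖⁻¹ :=
          inv_anti₀ hinvpos hbnd2
        have h2 : (1 / (2 * d))⁻¹ = 2 * d := by field_simp
        linarith
      have hnear : ‖(L - w • 1) - (u : 𝒜)‖ < ‖((u⁻¹ : 𝒜ˣ) : 𝒜)‖⁻¹ := by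
        have heq : (L - w • 1) - (u : 𝒜) = (-(d : ℂ)) • 1 := by
          rw [hu]
          have : (w - (d : ℂ)) • (1 : 𝒜) = w • 1 - (d : ℂ) • 1 := sub_smul _ _ _
          rw [this]
          abel_nf
          rw [show ((-1 : ℤ) • ((d:ℂ) • (1:𝒜))) = (-(d:ℂ)) • (1:𝒜) by
            simp [neg_smul]]
          abel
        rw [heq]
        have : ‖(-(d : ℂ)) • (1 : 𝒜)‖ = d := by
          rw [norm_smul, norm_one, mul_one, norm_neg]
          simp [Complex.norm_real, abs_of_nonneg hdpos.le]
        rw [this]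
        exact hdinv
      exact (u.ofNearby _ hnear).isUnit
  have := key N le_rfl
  simpa using this


set_option maxHeartbeats 1000000 in

/-- Resolvent bound for the block operator `L(f₀,f₁) = (−W† f₁, W f₀ + A f₁)`:
there is `C < ∞` so that for `Re z < γ₀ = Δ/(1+φ²)`, `L - z•I` is boundedly invertible with
`‖(L - zI)⁻¹‖ ≤ C/(γ₀ - Re z)`. -/
theorem stmt_2 {H₀ H₁ : Type*}
    [NormedAddCommGroup H₀] [InnerProductSpace ℂ H₀] [CompleteSpace H₀]
    [NormedAddCommGroup H₁] [InnerProductSpace ℂ H₁] [CompleteSpace H₁]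
    (W : H₀ →L[ℂ] H₁) (hW : W ≠ 0)
    (A : H₁ →L[ℂ] H₁) (Δ : ℝ) (hΔ : 0 < Δ)
    (hA : ∀ f : H₁, Δ * ‖f‖ ^ 2 ≤ ((inner ℂ f (A f) : ℂ)).re)
    (Ainv : H₁ →L[ℂ] H₁)
    (hA1 : A.comp Ainv = ContinuousLinearMap.id ℂ H₁)
    (hA2 : Ainv.comp A = ContinuousLinearMap.id ℂ H₁)
    (α : ℝ) (hα : 0 < α)
    (hlow : ∀ f : H₀, α * (‖W‖ / Δ) * ‖f‖ ≤ ‖Ainv (W f)‖)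
    (L : WithLp 2 (H₀ × H₁) →L[ℂ] WithLp 2 (H₀ × H₁))
    (hL : ∀ f : WithLp 2 (H₀ × H₁),
      WithLp.equiv 2 (H₀ × H₁) (L f) =
        (-(ContinuousLinearMap.adjoint W) ((WithLp.equiv 2 (H₀ × H₁) f).2),
          W ((WithLp.equiv 2 (H₀ × H₁) f).1) + A ((WithLp.equiv 2 (H₀ × H₁) f).2)))
    (γ₀ : ℝ)
    (hγ₀ : γ₀ = Δ / (1 + ((1 / α) * (2 * Δ / ‖W‖ + (9 / 8) * (‖W‖ / Δ))) ^ 2)) :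
    ∃ C : ℝ, 0 < C ∧ ∀ z : ℂ, z.re < γ₀ →
      ∃ R : WithLp 2 (H₀ × H₁) →L[ℂ] WithLp 2 (H₀ × H₁),
        (L - z • ContinuousLinearMap.id ℂ (WithLp 2 (H₀ × H₁))).comp R =
            ContinuousLinearMap.id ℂ (WithLp 2 (H₀ × H₁)) ∧
        R.comp (L - z • ContinuousLinearMap.id ℂ (WithLp 2 (H₀ × H₁))) =
            ContinuousLinearMap.id ℂ (WithLp 2 (H₀ × H₁)) ∧
        ‖R‖ ≤ C / (γ₀ - z.re) := by
  classical
  set E := WithLp 2 (H₀ × H₁)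
  -- basic positivity facts
  have hWpos : 0 < ‖W‖ := by
    rcases eq_or_lt_of_le (norm_nonneg W) with h | h
    · exact absurd ((ContinuousLinearMap.opNorm_zero_iff W).mp h.symm) hW
    · exact h
  have hAbelow : ∀ u : H₁, Δ * ‖u‖ ≤ ‖A u‖ := by
    intro u
    rcases eq_or_lt_of_le (norm_nonneg u) with h | h
    · rw [← h]; simp
    · have h1 : Δ * ‖u‖ ^ 2 ≤ ‖u‖ * ‖A u‖ := by
        refine (hA u).trans ?_
        calc ((inner ℂ u (A u) : ℂ)).re ≤ ‖(inner ℂ u (A u) : ℂ)‖ := Complex.re_le_norm _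
          _ ≤ ‖u‖ * ‖A u‖ := norm_inner_le_norm _ _
      nlinarith
  have hAinvle : ∀ v : H₁, ‖Ainv v‖ ≤ ‖v‖ / Δ := by
    intro v
    have h1 : A (Ainv v) = v := by
      have := ContinuousLinearMap.ext_iff.mp hA1 v
      simpa using this
    have := hAbelow (Ainv v)
    rw [h1] at this
    rw [le_div_iff₀ hΔ]; linarith
  obtain ⟨f₀, hf₀⟩ : ∃ f : H₀, W f ≠ 0 := by
    by_contra h
    push_neg at h
    exact hW (ContinuousLinearMap.ext fun f => by simpa using h f)
  haveI hntE : Nontrivial E := by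
    refine ⟨(WithLp.equiv 2 (H₀ × H₁)).symm (f₀, 0), 0, fun h => ?_⟩
    apply hf₀
    have := congrArg (WithLp.equiv 2 (H₀ × H₁)) h
    simp only [Equiv.apply_symm_apply] at this
    have hf0 : f₀ = 0 := congrArg Prod.fst this |>.trans (by simp)
    rw [hf0]; simp
  have hα1 : α ≤ 1 := by
    have hfpos : 0 < ‖f₀‖ := by
      rcases eq_or_lt_of_le (norm_nonneg f₀) with h | h
      · exfalso; apply hf₀; rw [show f₀ = 0 from norm_eq_zero.mp h.symm]; simp
      · exact h
    have h1 := hlow f₀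
    have h2 : ‖Ainv (W f₀)‖ ≤ ‖W f₀‖ / Δ := hAinvle _
    have h3 : ‖W f₀‖ ≤ ‖W‖ * ‖f₀‖ := W.le_opNorm f₀
    have h4 : α * (‖W‖ / Δ) * ‖f₀‖ ≤ (‖W‖ * ‖f₀‖) / Δ :=
      h1.trans (h2.trans (by gcongr))
    have h5 : α * (‖W‖ / Δ) * ‖f₀‖ = (α * (‖W‖ * ‖f₀‖)) / Δ := by ring
    rw [h5] at h4
    have h6 : α * (‖W‖ * ‖f₀‖) ≤ ‖W‖ * ‖f₀‖ :=
      le_of_mul_le_mul_right ((div_le_div_iff₀ hΔ hΔ).mp h4) hΔ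
    nlinarith [mul_pos hWpos hfpos]
  set φ : ℝ := (1 / α) * (2 * Δ / ‖W‖ + (9 / 8) * (‖W‖ / Δ)) with hφ
  have hφpos : 0 < φ := by
    apply mul_pos (by positivity)
    positivity
  have hsumnn : (0:ℝ) ≤ 2 * Δ / ‖W‖ + (9 / 8) * (‖W‖ / Δ) := by positivity
  have h1α : (1:ℝ) ≤ 1 / α := by rw [le_div_iff₀ hα]; linarith
  have hμφ : ‖W‖ / Δ ≤ φ := by
    rw [hφ]
    calc ‖W‖ / Δ ≤ 2 * Δ / ‖W‖ + (9 / 8) * (‖W‖ / Δ) := by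
          have := le_of_lt (div_pos hWpos hΔ)
          have := le_of_lt (div_pos (by positivity : (0:ℝ) < 2*Δ) hWpos)
          linarith
      _ = 1 * (2 * Δ / ‖W‖ + (9 / 8) * (‖W‖ / Δ)) := (one_mul _).symm
      _ ≤ (1 / α) * (2 * Δ / ‖W‖ + (9 / 8) * (‖W‖ / Δ)) :=
          mul_le_mul_of_nonneg_right h1α hsumnn
  have h2φ : 2 * Δ / (α * ‖W‖) ≤ φ := by
    rw [hφ]
    have he : 2 * Δ / (α * ‖W‖) = (1/α) * (2 * Δ / ‖W‖) := by
      field_simp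
    rw [he]
    have h9 : 2 * Δ / ‖W‖ ≤ 2 * Δ / ‖W‖ + (9 / 8) * (‖W‖ / Δ) := by
      have : (0:ℝ) ≤ (9 / 8) * (‖W‖ / Δ) := by positivity
      linarith
    exact mul_le_mul_of_nonneg_left h9 (by positivity)
  have hγΔ : γ₀ * (1 + φ ^ 2) = Δ := by
    rw [hγ₀, hφ]; field_simp
  have hγpos : 0 < γ₀ := by
    rw [hγ₀]; positivity
  set c : ℝ := 1 / Δ + 1 / (α * ‖W‖) with hc
  have hcpos : 0 < c := by rw [hc]; positivity
  set K : ℝ := 2 * φ * c + c ^ 2 with hK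
  set C₀ : ℝ := 1 + γ₀ + γ₀ * (2 * K + 1) with hC₀
  have hC₀pos : 0 < C₀ := by
    rw [hC₀, hK]; positivity
  -- The key lower bound
  have key : ∀ z : ℂ, z.re < γ₀ → ∀ F : E,
      (γ₀ - z.re) * ‖F‖ ≤ C₀ * ‖(L - z • (1 : E →L[ℂ] E)) F‖ := by
    intro z hz F
    set G : E := (L - z • (1 : E →L[ℂ] E)) F with hGdef
    set a : H₀ := F.fst with ha
    set b : H₁ := F.snd with hb
    have hGLF : G = L F - z • F := by
      rw [hGdef]; simp [ContinuousLinearMap.sub_apply, ContinuousLinearMap.smul_apply,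
        ContinuousLinearMap.one_apply]
    have hLF1 : (L F).fst = -(ContinuousLinearMap.adjoint W) b := by
      have := congrArg Prod.fst (hL F)
      simpa [WithLp.ofLp_fst, WithLp.ofLp_snd] using this
    have hLF2 : (L F).snd = W a + A b := by
      have := congrArg Prod.snd (hL F)
      simpa [WithLp.ofLp_fst, WithLp.ofLp_snd] using this
    have hG1 : G.fst = -(ContinuousLinearMap.adjoint W) b - z • a := by
      rw [hGLF, WithLp.sub_fst, WithLp.smul_fst, hLF1]
    have hG2 : G.snd = W a + A b - z • b := by
      rw [hGLF, WithLp.sub_snd, WithLp.smul_snd, hLF2]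
    have hnF2 : ‖F‖ ^ 2 = ‖a‖ ^ 2 + ‖b‖ ^ 2 := WithLp.prod_norm_sq_eq_of_L2 F
    have hnG2 : ‖G‖ ^ 2 = ‖G.fst‖ ^ 2 + ‖G.snd‖ ^ 2 := WithLp.prod_norm_sq_eq_of_L2 G
    have hg1le : ‖G.fst‖ ≤ ‖G‖ := by
      nlinarith [norm_nonneg G, norm_nonneg G.fst, norm_nonneg G.snd]
    have hg2le : ‖G.snd‖ ≤ ‖G‖ := by
      nlinarith [norm_nonneg G, norm_nonneg G.fst, norm_nonneg G.snd]
    -- Step A : real part identity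
    have hre : (inner ℂ F G : ℂ).re = (inner ℂ b (A b) : ℂ).re - z.re * ‖F‖ ^ 2 := by
      have h0 : (inner ℂ F G : ℂ) = inner ℂ a G.fst + inner ℂ b G.snd := WithLp.prod_inner_apply F G
      rw [h0, hG1, hG2]
      have hconj : (inner ℂ b (W a) : ℂ) = starRingEnd ℂ (inner ℂ (W a) b : ℂ) :=
        (inner_conj_symm _ _).symm
      have ha' : (inner ℂ a a : ℂ) = (‖a‖ : ℂ) ^ 2 := inner_self_eq_norm_sq_to_K _
      have hb' : (inner ℂ b b : ℂ) = (‖b‖ : ℂ) ^ 2 := inner_self_eq_norm_sq_to_K _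
      rw [inner_sub_right, inner_sub_right, inner_add_right, inner_neg_right,
        inner_smul_right, inner_smul_right, ContinuousLinearMap.adjoint_inner_right,
        hconj, ha', hb', hnF2]
      have hsym := congrArg Complex.re hconj
      simp only [Complex.conj_re] at hsym
      simp only [Complex.add_re, Complex.sub_re, Complex.mul_re, Complex.neg_re,
        Complex.conj_re, ← Complex.ofReal_pow, Complex.ofReal_re, Complex.ofReal_im, hsym]
      ring
    have habs : |(inner ℂ F G : ℂ).re| ≤ ‖F‖ * ‖G‖ := by
      refine le_trans (Complex.abs_re_le_norm _) ?_
      exact norm_inner_le_norm _ _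
    have hFG_le : (inner ℂ F G : ℂ).re ≤ ‖F‖ * ‖G‖ := le_trans (le_abs_self _) habs
    have hFG_ge : -(‖F‖ * ‖G‖) ≤ (inner ℂ F G : ℂ).re := by
      have := neg_abs_le ((inner ℂ F G : ℂ)).re
      linarith
    have hAineq : Δ * ‖b‖ ^ 2 ≤ ‖F‖ * ‖G‖ + z.re * ‖F‖ ^ 2 := by
      have := hA b
      linarith [hre, hFG_le]
    have hneg : -(z.re) * ‖F‖ ^ 2 ≤ ‖F‖ * ‖G‖ := by
      have h1 := hA b
      have h2 : (0:ℝ) ≤ Δ * ‖b‖ ^ 2 := by positivity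
      nlinarith [hre, hFG_ge]
    -- Step B : bound on ‖a‖
    have hBnd : ‖a‖ ≤ φ * ‖b‖ + c * ‖G‖ := by
      rcases le_or_gt ‖z‖ Δ with hzle | hzgt
      · -- small |z| : use hlow
        have hWa : W a = G.snd - A b + z • b := by rw [hG2]; abel
        have hAiWa : Ainv (W a) = Ainv G.snd - b + z • Ainv b := by
          rw [hWa, map_add, map_sub, map_smul]
          congr 1
          congr 1
          have := ContinuousLinearMap.ext_iff.mp hA2 b
          simpa using this
        have h1 : ‖Ainv (W a)‖ ≤ ‖G.snd‖ / Δ + ‖b‖ + ‖z‖ * (‖b‖ / Δ) := by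
          rw [hAiWa]
          calc ‖Ainv G.snd - b + z • Ainv b‖ ≤ ‖Ainv G.snd - b‖ + ‖z • Ainv b‖ := norm_add_le _ _
            _ ≤ ‖Ainv G.snd‖ + ‖b‖ + ‖z • Ainv b‖ := by
                have := norm_sub_le (Ainv G.snd) b; linarith
            _ ≤ ‖G.snd‖ / Δ + ‖b‖ + ‖z‖ * (‖b‖ / Δ) := by
                have h2 := hAinvle G.snd
                have h3 : ‖z • Ainv b‖ = ‖z‖ * ‖Ainv b‖ := by
                  rw [norm_smul]
                have h4 := hAinvle b
                have h5 : (0:ℝ) ≤ ‖z‖ := norm_nonneg z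
                nlinarith
        have h6 : ‖z‖ * (‖b‖ / Δ) ≤ ‖b‖ := by
          rw [div_eq_mul_inv]
          calc ‖z‖ * (‖b‖ * Δ⁻¹) ≤ Δ * (‖b‖ * Δ⁻¹) := by
                apply mul_le_mul_of_nonneg_right hzle; positivity
            _ = ‖b‖ := by field_simp
        have h8 : α * (‖W‖ / Δ) * ‖a‖ ≤ ‖G‖ / Δ + 2 * ‖b‖ := by
          calc α * (‖W‖ / Δ) * ‖a‖ ≤ ‖Ainv (W a)‖ := hlow a
            _ ≤ ‖G.snd‖ / Δ + ‖b‖ + ‖z‖ * (‖b‖ / Δ) := h1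
            _ ≤ ‖G‖ / Δ + 2 * ‖b‖ := by
                have h9 : ‖G.snd‖ / Δ ≤ ‖G‖ / Δ := by gcongr
                linarith
        have h10 : ‖a‖ ≤ (2 * Δ / (α * ‖W‖)) * ‖b‖ + (1 / (α * ‖W‖)) * ‖G‖ := by
          have h8' : (α * ‖W‖ * ‖a‖) / Δ ≤ (‖G‖ + 2 * ‖b‖ * Δ) / Δ := by
            have e1 : α * (‖W‖ / Δ) * ‖a‖ = (α * ‖W‖ * ‖a‖) / Δ := by ring
            have e2 : ‖G‖ / Δ + 2 * ‖b‖ = (‖G‖ + 2 * ‖b‖ * Δ) / Δ := by field_simp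
            rw [e1, e2] at h8
            exact h8
          have h8'' : α * ‖W‖ * ‖a‖ ≤ ‖G‖ + 2 * ‖b‖ * Δ :=
            le_of_mul_le_mul_right ((div_le_div_iff₀ hΔ hΔ).mp h8') hΔ
          have e3 : (2 * Δ / (α * ‖W‖)) * ‖b‖ + (1 / (α * ‖W‖)) * ‖G‖
              = (‖G‖ + 2 * ‖b‖ * Δ) / (α * ‖W‖) := by
            field_simp; ring
          rw [e3, le_div_iff₀ (by positivity : (0:ℝ) < α * ‖W‖)]
          linarith [h8'']
        have h11 : (2 * Δ / (α * ‖W‖)) * ‖b‖ ≤ φ * ‖b‖ :=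
          mul_le_mul_of_nonneg_right h2φ (norm_nonneg b)
        have h12 : (1 / (α * ‖W‖)) * ‖G‖ ≤ c * ‖G‖ := by
          apply mul_le_mul_of_nonneg_right _ (norm_nonneg (E := WithLp 2 (H₀ × H₁)) G)
          rw [hc]
          have : (0:ℝ) < 1/Δ := by positivity
          linarith
        exact h10.trans (add_le_add h11 h12)
      · -- large |z|
        have hza : z • a = -(ContinuousLinearMap.adjoint W) b - G.fst := by
          rw [hG1]; abel
        have h1 : ‖z‖ * ‖a‖ ≤ ‖W‖ * ‖b‖ + ‖G.fst‖ := by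
          have h2 : ‖z • a‖ = ‖z‖ * ‖a‖ := by rw [norm_smul]
          rw [← h2, hza]
          calc ‖-(ContinuousLinearMap.adjoint W) b - G.fst‖
              ≤ ‖-(ContinuousLinearMap.adjoint W) b‖ + ‖G.fst‖ := norm_sub_le _ _
            _ ≤ ‖W‖ * ‖b‖ + ‖G.fst‖ := by
                rw [norm_neg]
                have h3 : ‖(ContinuousLinearMap.adjoint W) b‖
                    ≤ ‖ContinuousLinearMap.adjoint W‖ * ‖b‖ :=
                  (ContinuousLinearMap.adjoint W).le_opNorm b
                have h4 : ‖ContinuousLinearMap.adjoint W‖ = ‖W‖ :=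
                  LinearIsometryEquiv.norm_map _ W
                rw [h4] at h3; linarith
        have h5 : Δ * ‖a‖ ≤ ‖W‖ * ‖b‖ + ‖G‖ := by
          have : Δ * ‖a‖ ≤ ‖z‖ * ‖a‖ :=
            mul_le_mul_of_nonneg_right (le_of_lt hzgt) (norm_nonneg a)
          linarith
        have h6 : ‖a‖ ≤ (‖W‖ / Δ) * ‖b‖ + (1 / Δ) * ‖G‖ := by
          have e3 : (‖W‖ / Δ) * ‖b‖ + (1 / Δ) * ‖G‖ = (‖W‖ * ‖b‖ + ‖G‖) / Δ := by
            field_simp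
          rw [e3, le_div_iff₀ hΔ]
          linarith [h5]
        have h7 : (‖W‖ / Δ) * ‖b‖ ≤ φ * ‖b‖ := mul_le_mul_of_nonneg_right hμφ (norm_nonneg b)
        have h8 : (1 / Δ) * ‖G‖ ≤ c * ‖G‖ := by
          apply mul_le_mul_of_nonneg_right _ (norm_nonneg (E := WithLp 2 (H₀ × H₁)) G)
          rw [hc]
          have : (0:ℝ) < 1/(α * ‖W‖) := by positivity
          linarith
        exact h6.trans (add_le_add h7 h8)
    exact stmt2_aux_arith Δ γ₀ φ c K C₀ z.re ‖a‖ ‖b‖ ‖F‖ ‖G‖ hγpos hφpos hcpos hγΔ hK hC₀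
      (norm_nonneg a) (norm_nonneg b) (norm_nonneg (E := WithLp 2 (H₀ × H₁)) F) (norm_nonneg (E := WithLp 2 (H₀ × H₁)) G) hnF2 hz hAineq hneg hBnd
  -- inverse bound
  have bound : ∀ z : ℂ, z.re < γ₀ → ∀ u : (E →L[ℂ] E)ˣ, (u : E →L[ℂ] E) = L - z • 1 →
      ‖((u⁻¹ : (E →L[ℂ] E)ˣ) : E →L[ℂ] E)‖ ≤ C₀ / (γ₀ - z.re) := by
    intro z hz u hu
    have hzpos : 0 < γ₀ - z.re := by linarith
    apply ContinuousLinearMap.opNorm_le_bound _ (by positivity)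
    intro G
    have happ : (L - z • (1 : E →L[ℂ] E)) (((u⁻¹ : (E →L[ℂ] E)ˣ) : E →L[ℂ] E) G) = G := by
      have h1 : ((u : E →L[ℂ] E) * ((u⁻¹ : (E →L[ℂ] E)ˣ) : E →L[ℂ] E)) = 1 := u.mul_inv
      have h2 := ContinuousLinearMap.ext_iff.mp h1 G
      rw [ContinuousLinearMap.mul_apply, ContinuousLinearMap.one_apply] at h2
      rw [← hu]
      exact h2
    have h3 := key z hz (((u⁻¹ : (E →L[ℂ] E)ˣ) : E →L[ℂ] E) G)
    rw [happ] at h3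
    rw [div_mul_eq_mul_div, le_div_iff₀ hzpos]
    nlinarith [h3]
  have main : ∀ z : ℂ, z.re < γ₀ → IsUnit (L - z • (1 : E →L[ℂ] E)) :=
    stmt2_aux_units L γ₀ C₀ hC₀pos bound
  refine ⟨C₀, hC₀pos, fun z hz => ?_⟩
  obtain ⟨u, hu⟩ := main z hz
  refine ⟨((u⁻¹ : (E →L[ℂ] E)ˣ) : E →L[ℂ] E), ?_, ?_, bound z hz u hu⟩
  · show (L - z • ContinuousLinearMap.id ℂ E).comp _ = ContinuousLinearMap.id ℂ E
    rw [← ContinuousLinearMap.one_def, ← ContinuousLinearMap.mul_def, ← hu]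
    exact u.mul_inv
  · show ContinuousLinearMap.comp _ (L - z • ContinuousLinearMap.id ℂ E) = ContinuousLinearMap.id ℂ E
    rw [← ContinuousLinearMap.one_def, ← ContinuousLinearMap.mul_def, ← hu]
    exact u.inv_mul
end

section
/- Let H₀ and H₁ be complex Hilbert spaces, let W : H₀ →L[ℂ] H₁ be a bounded linear map with operator norm w = ‖W‖, and let A : H₁ →L[ℂ] H₁ be a bounded operator satisfying Re ⟨f, A f⟩ ≥ ‖f‖² for all f ∈ H₁. Let z = λ + iη with λ, η ∈ ℝ and λ < 1 (so that A − z·I is boundedly invertible), and define the bounded operator S(z) = W† (A − zI)⁻¹ W − z·I on H₀, where W† is the adjoint of W. Then for every f₀ ∈ H₀, |Im ⟨f₀, S(z) f₀⟩| ≥ ( |η| − w²/(1 − λ) ) ‖f₀‖². -/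
/-- With `Re ⟨f,Af⟩ ≥ ‖f‖²`, `z = λ + iη`, `λ < 1`, and
`S(z) = W†(A−zI)⁻¹W − zI`, one has `|Im ⟨f₀, S(z) f₀⟩| ≥ (|η| − w²/(1−λ))‖f₀‖²`. -/
theorem stmt_4 {H₀ H₁ : Type*}
    [NormedAddCommGroup H₀] [InnerProductSpace ℂ H₀] [CompleteSpace H₀]
    [NormedAddCommGroup H₁] [InnerProductSpace ℂ H₁] [CompleteSpace H₁]
    (W : H₀ →L[ℂ] H₁)
    (A : H₁ →L[ℂ] H₁)
    (hA : ∀ f : H₁, ‖f‖ ^ 2 ≤ ((inner ℂ f (A f) : ℂ)).re)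
    (z : ℂ) (hz : z.re < 1)
    (R : H₁ →L[ℂ] H₁)
    (hR1 : (A - z • ContinuousLinearMap.id ℂ H₁).comp R = ContinuousLinearMap.id ℂ H₁)
    (hR2 : R.comp (A - z • ContinuousLinearMap.id ℂ H₁) = ContinuousLinearMap.id ℂ H₁)
    (S : H₀ →L[ℂ] H₀)
    (hS : S = (ContinuousLinearMap.adjoint W).comp (R.comp W) - z • ContinuousLinearMap.id ℂ H₀)
    (f₀ : H₀) :
    (|z.im| - ‖W‖ ^ 2 / (1 - z.re)) * ‖f₀‖ ^ 2 ≤ |((inner ℂ f₀ (S f₀) : ℂ)).im| := by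
  have hpos : (0 : ℝ) < 1 - z.re := by linarith
  -- bound on R
  have hRnorm : ∀ f : H₁, (1 - z.re) * ‖R f‖ ≤ ‖f‖ := by
    intro f
    set u := R f with hu
    have hAu : (A - z • ContinuousLinearMap.id ℂ H₁) u = f := by
      have := congrArg (fun T : H₁ →L[ℂ] H₁ => T f) hR1
      simpa using this
    have h1 : (1 - z.re) * ‖u‖ ^ 2 ≤ ((inner ℂ u ((A - z • ContinuousLinearMap.id ℂ H₁) u) : ℂ)).re := by
      have hcalc : ((inner ℂ u ((A - z • ContinuousLinearMap.id ℂ H₁) u) : ℂ)).re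
          = ((inner ℂ u (A u) : ℂ)).re - z.re * ‖u‖ ^ 2 := by
        simp [ContinuousLinearMap.sub_apply, ContinuousLinearMap.smul_apply,
          inner_sub_right, inner_smul_right, inner_self_eq_norm_sq_to_K,
          ← Complex.ofReal_pow]
      have := hA u
      nlinarith [norm_nonneg u]
    have h2 : ((inner ℂ u f : ℂ)).re ≤ ‖u‖ * ‖f‖ := by
      calc ((inner ℂ u f : ℂ)).re ≤ ‖(inner ℂ u f : ℂ)‖ := Complex.re_le_norm _
        _ ≤ ‖u‖ * ‖f‖ := norm_inner_le_norm u f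
    rw [hAu] at h1
    rcases eq_or_lt_of_le (norm_nonneg u) with h0 | h0
    · rw [← h0]; simp [norm_nonneg]
    · have : (1 - z.re) * ‖u‖ * ‖u‖ ≤ ‖u‖ * ‖f‖ := by nlinarith
      exact le_of_mul_le_mul_right (by nlinarith) h0
  set a : ℂ := inner ℂ (W f₀) (R (W f₀)) with ha
  have hinner : (inner ℂ f₀ (S f₀) : ℂ) = a - z * (‖f₀‖ : ℂ) ^ 2 := by
    rw [hS]
    simp [ContinuousLinearMap.sub_apply, ContinuousLinearMap.smul_apply,
      inner_sub_right, inner_smul_right, ContinuousLinearMap.adjoint_inner_right,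
      inner_self_eq_norm_sq_to_K, ha]
  have him : ((inner ℂ f₀ (S f₀) : ℂ)).im = a.im - z.im * ‖f₀‖ ^ 2 := by
    rw [hinner]; simp [← Complex.ofReal_pow]
  have hWf : ‖W f₀‖ ≤ ‖W‖ * ‖f₀‖ := W.le_opNorm f₀
  have haim : |a.im| ≤ ‖W‖ ^ 2 * ‖f₀‖ ^ 2 / (1 - z.re) := by
    have h3 : |a.im| ≤ ‖a‖ := Complex.abs_im_le_norm a
    have h4 : ‖a‖ ≤ ‖W f₀‖ * ‖R (W f₀)‖ := norm_inner_le_norm _ _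
    have h5 := hRnorm (W f₀)
    rw [le_div_iff₀ hpos]
    have hW0 : (0:ℝ) ≤ ‖W‖ := norm_nonneg W
    nlinarith [norm_nonneg (W f₀), norm_nonneg (R (W f₀)), norm_nonneg f₀]
  rw [him]
  have key : |z.im * ‖f₀‖ ^ 2| - |a.im| ≤ |a.im - z.im * ‖f₀‖ ^ 2| := by
    rw [abs_sub_comm]
    exact abs_sub_abs_le_abs_sub _ _
  have : |z.im * ‖f₀‖ ^ 2| = |z.im| * ‖f₀‖ ^ 2 := by
    rw [abs_mul, abs_of_nonneg (pow_nonneg (norm_nonneg f₀) 2)]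
  rw [this] at key
  have hdiv : ‖W‖ ^ 2 / (1 - z.re) * ‖f₀‖ ^ 2 = ‖W‖ ^ 2 * ‖f₀‖ ^ 2 / (1 - z.re) := by ring
  nlinarith [key]
end

section
/- Let H₀ and H₁ be complex Hilbert spaces, let W : H₀ →L[ℂ] H₁ be a bounded linear map with operator norm w = ‖W‖, and let A : H₁ →L[ℂ] H₁ be a bounded operator satisfying Re ⟨f, A f⟩ ≥ ‖f‖² for all f ∈ H₁ (in particular A is boundedly invertible). Suppose there is α > 0 such that ‖A⁻¹ (W f)‖ ≥ α w ‖f‖ for all f ∈ H₀. Let z ∈ ℂ with λ := Re z < 1, and define the bounded operator S(z) = W† (A − zI)⁻¹ W − z·I on H₀, where W† is the adjoint of W. Then for every f₀ ∈ H₀, Re ⟨f₀, S(z) f₀⟩ ≥ ( α² w² (1 − λ)/(1 + |z|)² − λ ) ‖f₀‖². -/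
/-- With `Re ⟨f,Af⟩ ≥ ‖f‖²`, `‖A⁻¹(Wf)‖ ≥ α w ‖f‖`, `λ = Re z < 1`, and
`S(z) = W†(A−zI)⁻¹W − zI`, one has
`Re ⟨f₀, S(z) f₀⟩ ≥ (α²w²(1−λ)/(1+|z|)² − λ)‖f₀‖²`. -/
theorem stmt_5 {H₀ H₁ : Type*}
    [NormedAddCommGroup H₀] [InnerProductSpace ℂ H₀] [CompleteSpace H₀]
    [NormedAddCommGroup H₁] [InnerProductSpace ℂ H₁] [CompleteSpace H₁]
    (W : H₀ →L[ℂ] H₁)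
    (A : H₁ →L[ℂ] H₁)
    (hA : ∀ f : H₁, ‖f‖ ^ 2 ≤ ((inner ℂ f (A f) : ℂ)).re)
    (Ainv : H₁ →L[ℂ] H₁)
    (hA1 : A.comp Ainv = ContinuousLinearMap.id ℂ H₁)
    (hA2 : Ainv.comp A = ContinuousLinearMap.id ℂ H₁)
    (α : ℝ) (hα : 0 < α)
    (hlow : ∀ f : H₀, α * ‖W‖ * ‖f‖ ≤ ‖Ainv (W f)‖)
    (z : ℂ) (hz : z.re < 1)
    (R : H₁ →L[ℂ] H₁)
    (hR1 : (A - z • ContinuousLinearMap.id ℂ H₁).comp R = ContinuousLinearMap.id ℂ H₁)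
    (hR2 : R.comp (A - z • ContinuousLinearMap.id ℂ H₁) = ContinuousLinearMap.id ℂ H₁)
    (S : H₀ →L[ℂ] H₀)
    (hS : S = (ContinuousLinearMap.adjoint W).comp (R.comp W) - z • ContinuousLinearMap.id ℂ H₀)
    (f₀ : H₀) :
    (α ^ 2 * ‖W‖ ^ 2 * (1 - z.re) / (1 + ‖z‖) ^ 2 - z.re) * ‖f₀‖ ^ 2 ≤
      ((inner ℂ f₀ (S f₀) : ℂ)).re := by
  set g := R (W f₀) with hg
  have hAg : A g - z • g = W f₀ := by
    have h1 := congrArg (fun T : H₁ →L[ℂ] H₁ => T (W f₀)) hR1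
    simpa using h1
  have hnormg : ∀ h : H₁, ‖Ainv h‖ ≤ ‖h‖ := by
    intro h
    have hAf : A (Ainv h) = h := by
      have := congrArg (fun T : H₁ →L[ℂ] H₁ => T h) hA1
      simpa using this
    have h2 : ‖Ainv h‖ ^ 2 ≤ ((inner ℂ (Ainv h) h : ℂ)).re := by
      have := hA (Ainv h); rwa [hAf] at this
    have h3 : ((inner ℂ (Ainv h) h : ℂ)).re ≤ ‖Ainv h‖ * ‖h‖ := by
      calc ((inner ℂ (Ainv h) h : ℂ)).re ≤ ‖(inner ℂ (Ainv h) h : ℂ)‖ := Complex.re_le_norm _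
        _ ≤ ‖Ainv h‖ * ‖h‖ := norm_inner_le_norm _ _
    nlinarith [norm_nonneg (Ainv h), norm_nonneg h]
  have hAinvg : Ainv (W f₀) = g - z • Ainv g := by
    rw [← hAg]
    have hAAg : Ainv (A g) = g := by
      have := congrArg (fun T : H₁ →L[ℂ] H₁ => T g) hA2
      simpa using this
    simp [map_sub, map_smul, hAAg]
  have hkey : α * ‖W‖ * ‖f₀‖ ≤ (1 + ‖z‖) * ‖g‖ := by
    calc α * ‖W‖ * ‖f₀‖ ≤ ‖Ainv (W f₀)‖ := hlow f₀
      _ = ‖g - z • Ainv g‖ := by rw [hAinvg]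
      _ ≤ ‖g‖ + ‖z • Ainv g‖ := norm_sub_le _ _
      _ ≤ ‖g‖ + ‖z‖ * ‖g‖ := by
          rw [norm_smul]
          have := hnormg g
          gcongr
      _ = (1 + ‖z‖) * ‖g‖ := by ring
  have hre : ((inner ℂ f₀ (S f₀) : ℂ)).re =
      ((inner ℂ g (A g) : ℂ)).re - z.re * ‖g‖ ^ 2 - z.re * ‖f₀‖ ^ 2 := by
    rw [hS]
    simp only [ContinuousLinearMap.sub_apply, ContinuousLinearMap.smul_apply,
      ContinuousLinearMap.coe_comp', Function.comp_apply, ContinuousLinearMap.id_apply,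
      inner_sub_right, inner_smul_right]
    rw [ContinuousLinearMap.adjoint_inner_right, ← hg, ← hAg, inner_sub_left, inner_smul_left]
    rw [inner_self_eq_norm_sq_to_K, inner_self_eq_norm_sq_to_K]
    have h4 : ((inner ℂ (A g) g : ℂ)).re = ((inner ℂ g (A g) : ℂ)).re := by
      simpa using inner_re_symm (𝕜 := ℂ) (A g) g
    simp [Complex.sub_re, Complex.mul_re, h4]
    simp [← Complex.ofReal_pow]
  have hz' : (0:ℝ) < 1 - z.re := by linarith
  have hd : (0:ℝ) < (1 + ‖z‖) ^ 2 := by positivity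
  have hsq : (α * ‖W‖ * ‖f₀‖) ^ 2 ≤ ((1 + ‖z‖) * ‖g‖) ^ 2 := by
    have h0 : 0 ≤ α * ‖W‖ * ‖f₀‖ := by positivity
    exact pow_le_pow_left₀ h0 hkey 2
  have h5 : α ^ 2 * ‖W‖ ^ 2 * (1 - z.re) / (1 + ‖z‖) ^ 2 * ‖f₀‖ ^ 2 ≤ (1 - z.re) * ‖g‖ ^ 2 := by
    rw [div_mul_eq_mul_div, div_le_iff₀ hd]
    nlinarith [hsq, hz']
  rw [hre]
  nlinarith [h5, hA g]
end

section
/- For every real w > 0 and every α with 0 < α ≤ 1, there is a unique η₊ > 0 satisfying 1 − w²/η₊ = α²w²/((2 + η₊)² + α²w²). Moreover η₊ ≤ (9/8)·w², and the common value γ := α²w²/((2 + η₊)² + α²w²) satisfies γ ≥ 1/(1 + φ²), where φ = (1/α)·(2/w + (9/8)·w). -/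
/-- For `w > 0` and `0 < α ≤ 1` there is a unique `η₊ > 0` with
`1 − w²/η₊ = α²w²/((2+η₊)² + α²w²)`; moreover `η₊ ≤ (9/8)w²` and the common value
`γ = α²w²/((2+η₊)² + α²w²)` satisfies `γ ≥ 1/(1+φ²)` with `φ = (1/α)(2/w + (9/8)w)`. -/
theorem stmt_6 (w α : ℝ) (hw : 0 < w) (hα0 : 0 < α) (hα1 : α ≤ 1) :
    (∃! η : ℝ, 0 < η ∧ 1 - w ^ 2 / η = α ^ 2 * w ^ 2 / ((2 + η) ^ 2 + α ^ 2 * w ^ 2)) ∧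
      ∀ η : ℝ, 0 < η → 1 - w ^ 2 / η = α ^ 2 * w ^ 2 / ((2 + η) ^ 2 + α ^ 2 * w ^ 2) →
        η ≤ (9 / 8) * w ^ 2 ∧
          1 / (1 + ((1 / α) * (2 / w + (9 / 8) * w)) ^ 2) ≤
            α ^ 2 * w ^ 2 / ((2 + η) ^ 2 + α ^ 2 * w ^ 2) := by
  have hw2 : 0 < w ^ 2 := by positivity
  have key : ∀ η : ℝ, 0 < η →
      ((1 - w ^ 2 / η = α ^ 2 * w ^ 2 / ((2 + η) ^ 2 + α ^ 2 * w ^ 2)) ↔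
        (η - w ^ 2) * (2 + η) ^ 2 = α ^ 2 * w ^ 4) := by
    intro η hη
    have hden : (0:ℝ) < (2 + η) ^ 2 + α ^ 2 * w ^ 2 := by positivity
    constructor
    · intro h
      field_simp at h
      linear_combination h
    · intro h
      field_simp
      linear_combination h
  -- any solution is > w^2
  have hgt : ∀ η : ℝ, (η - w ^ 2) * (2 + η) ^ 2 = α ^ 2 * w ^ 4 → 0 ≤ η → w ^ 2 < η := by
    intro η h hη
    by_contra hc
    push_neg at hc
    have h1 : (η - w ^ 2) * (2 + η) ^ 2 ≤ 0 :=
      mul_nonpos_of_nonpos_of_nonneg (by linarith) (sq_nonneg _)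
    have h2 : (0:ℝ) < α ^ 2 * w ^ 4 := by positivity
    linarith
  -- uniqueness of positive solutions of polynomial equation
  have huniq : ∀ a b : ℝ, w ^ 2 < a → w ^ 2 < b →
      (a - w ^ 2) * (2 + a) ^ 2 = α ^ 2 * w ^ 4 →
      (b - w ^ 2) * (2 + b) ^ 2 = α ^ 2 * w ^ 4 → a = b := by
    intro a b ha hb hga hgb
    have hB : 0 < a ^ 2 + a * b + b ^ 2 + (4 - w ^ 2) * (a + b) + 4 - 4 * w ^ 2 := by
      nlinarith [mul_pos (sub_pos.2 ha) (sub_pos.2 hb), sq_nonneg (w ^ 2 - 2),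
        mul_pos (lt_trans hw2 ha) (lt_trans hw2 hb)]
    have h0 : (a - b) * (a ^ 2 + a * b + b ^ 2 + (4 - w ^ 2) * (a + b) + 4 - 4 * w ^ 2) = 0 := by
      linear_combination hga - hgb
    rcases mul_eq_zero.1 h0 with h | h
    · linarith
    · linarith
  -- existence via IVT
  have hcont : ContinuousOn (fun x : ℝ => (x - w ^ 2) * (2 + x) ^ 2)
      (Set.Icc (w ^ 2) (w ^ 2 + α ^ 2 * w ^ 4 / 4)) := by fun_prop
  have hab : w ^ 2 ≤ w ^ 2 + α ^ 2 * w ^ 4 / 4 := by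
    have : (0:ℝ) ≤ α ^ 2 * w ^ 4 / 4 := by positivity
    linarith
  obtain ⟨η₀, hη₀mem, hη₀⟩ := intermediate_value_Icc hab hcont
    (show α ^ 2 * w ^ 4 ∈ Set.Icc ((w ^ 2 - w ^ 2) * (2 + w ^ 2) ^ 2)
      ((w ^ 2 + α ^ 2 * w ^ 4 / 4 - w ^ 2) * (2 + (w ^ 2 + α ^ 2 * w ^ 4 / 4)) ^ 2) by
      constructor
      · nlinarith [mul_pos (pow_pos hα0 2) (pow_pos hw 4)]
      · nlinarith [sq_nonneg (w ^ 2 + α ^ 2 * w ^ 4 / 4), mul_pos hα0 hα0])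
  have hη₀gt : w ^ 2 < η₀ := hgt η₀ hη₀ (le_trans hw2.le hη₀mem.1)
  have hη₀pos : 0 < η₀ := lt_trans hw2 hη₀gt
  constructor
  · refine ⟨η₀, ⟨hη₀pos, (key η₀ hη₀pos).2 hη₀⟩, ?_⟩
    rintro b ⟨hbpos, hbeq⟩
    have hb := (key b hbpos).1 hbeq
    exact huniq b η₀ (hgt b hb hbpos.le) hη₀gt hb hη₀
  · intro η hηpos heq
    have hg := (key η hηpos).1 heq
    have hηgt := hgt η hg hηpos.le
    have h98 : η ≤ (9 / 8) * w ^ 2 := by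
      by_contra h
      push_neg at h
      have h3w : 3 * w ≤ 2 + (9 / 8) * w ^ 2 := by nlinarith [sq_nonneg (3 * w - 4)]
      have h2 : 9 * w ^ 2 < (2 + η) ^ 2 := by nlinarith
      have hA : w ^ 2 / 8 < η - w ^ 2 := by linarith
      have h4 : (w ^ 2 / 8) * (9 * w ^ 2) ≤ (η - w ^ 2) * (2 + η) ^ 2 :=
        mul_le_mul hA.le h2.le (by positivity) (by linarith)
      have hα2 : α ^ 2 ≤ 1 := by nlinarith
      nlinarith [pow_pos hw 4]
    refine ⟨h98, ?_⟩
    have hden : (0:ℝ) < (2 + η) ^ 2 + α ^ 2 * w ^ 2 := by positivity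
    have hφ : (0:ℝ) < 1 + ((1 / α) * (2 / w + (9 / 8) * w)) ^ 2 := by positivity
    rw [div_le_div_iff₀ hφ hden]
    have hval : α ^ 2 * w ^ 2 * (1 + ((1 / α) * (2 / w + (9 / 8) * w)) ^ 2) =
        α ^ 2 * w ^ 2 + (2 + (9 / 8) * w ^ 2) ^ 2 := by
      field_simp
    rw [hval]
    have hsq : (2 + η) ^ 2 ≤ (2 + (9 / 8) * w ^ 2) ^ 2 :=
      pow_le_pow_left₀ (by linarith) (by linarith) 2
    linarith
end

section
/- Let d ≥ 1 and m > 0. Let H : ℝ → B(ℓ²(ℤᵈ)) be a family of bounded operators, norm-continuous in t, such that H(t)(x,x) is real for all t and x, and such that v := sup_t sup_y ∑_{x ≠ y} e^{m‖x−y‖₁} |H(t)(x,y)| < ∞. Let U(t,s) be a two-parameter family of bounded operators on ℓ²(ℤᵈ) with U(s,s) = I for every s, such that for each fixed s the map t ↦ U(t,s) is differentiable in operator norm and satisfies i ∂_t U(t,s) = H(t) U(t,s). Then for all s, t ∈ ℝ and every y ∈ ℤᵈ, ∑_{x ∈ ℤᵈ} e^{m‖x−y‖₁} |U(t,s)(x,y)|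 ≤ e^{v·|t−s|}. -/
/-- The kernel `T(x,y) = ⟨δ_x, T δ_y⟩` of a bounded operator on `ℓ²(ℤᵈ)`. -/
noncomputable def opKernel {d : ℕ}
    (T : lp (fun _ : Fin d → ℤ => ℂ) 2 →L[ℂ] lp (fun _ : Fin d → ℤ => ℂ) 2)
    (x y : Fin d → ℤ) : ℂ :=
  (T (lp.single 2 y 1) : (Fin d → ℤ) → ℂ) x

/-- The ℓ¹ norm `‖x‖₁ = ∑ i, |x i|` of `x ∈ ℤᵈ`. -/
def normOne {d : ℕ} (x : Fin d → ℤ) : ℝ := ∑ i, |(x i : ℝ)|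

open MeasureTheory Filter

lemma enorm_hasSum_le {ι : Type*} {f : ι → ℂ} {a : ℂ} (h : HasSum f a) :
    (‖a‖₊ : ENNReal) ≤ ∑' i, (‖f i‖₊ : ENNReal) := by
  refine le_of_tendsto'
    (((ENNReal.continuous_coe.comp continuous_nnnorm).continuousAt).tendsto.comp h) ?_
  intro F
  calc (‖∑ i ∈ F, f i‖₊ : ENNReal) ≤ ∑ i ∈ F, (‖f i‖₊ : ENNReal) := by
        rw [← ENNReal.coe_finset_sum]; exact_mod_cast nnnorm_sum_le F f
    _ ≤ ∑' i, (‖f i‖₊ : ENNReal) := ENNReal.sum_le_tsum F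

lemma ofReal_norm_eq_coe_nnnorm {E : Type*} [SeminormedAddCommGroup E] (a : E) :
    ENNReal.ofReal ‖a‖ = (‖a‖₊ : ENNReal) := by
  exact ENNReal.ofReal_eq_coe_nnreal (norm_nonneg a)

noncomputable def evalCLM {d : ℕ} (x : Fin d → ℤ) :
    lp (fun _ : Fin d → ℤ => ℂ) 2 →L[ℂ] ℂ :=
  LinearMap.mkContinuous
    { toFun := fun f => f x
      map_add' := fun f g => by simp
      map_smul' := fun c f => by simp }
    1 (fun f => by rw [one_mul]; exact lp.norm_apply_le_norm two_ne_zero f x)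

@[simp] lemma evalCLM_apply {d : ℕ} (x : Fin d → ℤ) (f : lp (fun _ : Fin d → ℤ => ℂ) 2) :
    evalCLM x f = f x := rfl

lemma opKernel_eq {d : ℕ} (T : lp (fun _ : Fin d → ℤ => ℂ) 2 →L[ℂ] lp (fun _ : Fin d → ℤ => ℂ) 2)
    (x y : Fin d → ℤ) : opKernel T x y = evalCLM x (T (lp.single 2 y 1)) := rfl

lemma lp_single_smul {d : ℕ} (z : Fin d → ℤ) (c : ℂ) :
    (lp.single 2 z c : lp (fun _ : Fin d → ℤ => ℂ) 2)
      = c • (lp.single 2 z (1 : ℂ) : lp (fun _ : Fin d → ℤ => ℂ) 2) := by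
  ext x
  rw [lp.coeFn_smul]
  by_cases h : x = z <;> simp [lp.single_apply, h]

lemma hasSum_opKernel_comp {d : ℕ}
    (A B : lp (fun _ : Fin d → ℤ => ℂ) 2 →L[ℂ] lp (fun _ : Fin d → ℤ => ℂ) 2)
    (x y : Fin d → ℤ) :
    HasSum (fun z => opKernel A x z * opKernel B z y) (opKernel (A.comp B) x y) := by
  have hB := lp.hasSum_single (E := fun _ : Fin d → ℤ => ℂ) (p := 2) (by norm_num)
    (B (lp.single 2 y 1))
  have h2 := ((evalCLM x).comp A).hasSum hB
  have h3 : ∀ z, ((evalCLM x).comp A) (lp.single 2 z ((B (lp.single 2 y 1) : (Fin d → ℤ) → ℂ) z))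
      = opKernel A x z * opKernel B z y := by
    intro z
    rw [lp_single_smul]
    simp [opKernel_eq, mul_comm]
  simp only [h3] at h2; exact h2

lemma normOne_nonneg {d : ℕ} (x : Fin d → ℤ) : 0 ≤ normOne x :=
  Finset.sum_nonneg fun i _ => abs_nonneg _

@[simp] lemma normOne_zero {d : ℕ} : normOne (0 : Fin d → ℤ) = 0 := by
  simp [normOne]

lemma normOne_triangle {d : ℕ} (x z y : Fin d → ℤ) :
    normOne (x - y) ≤ normOne (x - z) + normOne (z - y) := by
  rw [normOne, normOne, normOne, ← Finset.sum_add_distrib]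
  refine Finset.sum_le_sum fun i _ => ?_
  have : ((x - y) i : ℝ) = ((x - z) i : ℝ) + ((z - y) i : ℝ) := by
    push_cast [Pi.sub_apply]; ring
  rw [this]
  exact abs_add_le _ _

lemma normOne_sub_comm {d : ℕ} (x z : Fin d → ℤ) : normOne (x - z) = normOne (z - x) := by
  rw [normOne, normOne]
  refine Finset.sum_congr rfl fun i _ => ?_
  have : ((x - z) i : ℝ) = -((z - x) i : ℝ) := by push_cast [Pi.sub_apply]; ring
  rw [this, abs_neg]

lemma abs_normOne_sub {d : ℕ} (x z y : Fin d → ℤ) :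
    |normOne (x - y) - normOne (z - y)| ≤ normOne (x - z) := by
  rw [abs_sub_le_iff]
  constructor
  · have := normOne_triangle x z y; linarith
  · have := normOne_triangle z x y; rw [normOne_sub_comm z x] at this; linarith

lemma summable_exp_neg_normOne {d : ℕ} (m : ℝ) (hm : 0 < m) :
    Summable (fun z : Fin d → ℤ => Real.exp (-(m * normOne z))) := by
  induction d with
  | zero =>
      have : IsEmpty (Fin 0) := by infer_instance
      exact Summable.of_finite
  | succ n ih =>
      rw [← (Fin.consEquiv fun _ => ℤ).summable_iff]
      have key : ∀ p : ℤ × (Fin n → ℤ),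
          Real.exp (-(m * normOne ((Fin.consEquiv fun _ => ℤ) p)))
            = Real.exp (-(m * |(p.1 : ℝ)|)) * Real.exp (-(m * normOne p.2)) := by
        intro p
        rw [← Real.exp_add]
        congr 1
        have : normOne ((Fin.consEquiv fun _ => ℤ) p) = |(p.1 : ℝ)| + normOne p.2 := by
          rw [normOne, Fin.sum_univ_succ, normOne]
          simp [Fin.consEquiv]
        rw [this]; ring
      refine Summable.congr ?_ (fun p => (key p).symm)
      have h1 : Summable (fun k : ℤ => Real.exp (-(m * |(k : ℝ)|))) := by
        have hnat : Summable (fun k : ℕ => Real.exp (-(m * k))) := by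
          have : ∀ k : ℕ, Real.exp (-(m * k)) = (Real.exp (-m)) ^ k := by
            intro k
            rw [← Real.exp_nat_mul]; ring_nf
          rw [funext this]
          exact summable_geometric_of_lt_one (Real.exp_nonneg _)
            (Real.exp_lt_one_iff.mpr (by linarith))
        refine Summable.of_nat_of_neg ?_ ?_ <;>
          · refine hnat.congr fun k => ?_
            simp
      exact h1.mul_of_nonneg ih (fun k => Real.exp_nonneg _) (fun z => Real.exp_nonneg _)

lemma lint_abs_pow (s t' : ℝ) (k : ℕ) :
    ∫⁻ τ in Set.uIoc s t', ENNReal.ofReal (|τ - s| ^ k)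
      = ENNReal.ofReal (|t' - s| ^ (k + 1) / (k + 1)) := by
  rcases le_total s t' with h | h
  · rw [Set.uIoc_of_le h]
    have hcongr : ∫⁻ τ in Set.Ioc s t', ENNReal.ofReal (|τ - s| ^ k)
        = ∫⁻ τ in Set.Ioc s t', ENNReal.ofReal ((τ - s) ^ k) := by
      refine setLIntegral_congr_fun measurableSet_Ioc ?_
      intro τ hτ; dsimp only
      rw [abs_of_nonneg (by linarith [hτ.1] : (0:ℝ) ≤ τ - s)]
    rw [hcongr]
    have hint : IntegrableOn (fun τ => (τ - s) ^ k) (Set.Ioc s t') := by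
      exact ((continuous_id.sub continuous_const).pow k : Continuous fun τ : ℝ => (τ - s)^k)
        |>.integrableOn_Ioc
    rw [← MeasureTheory.ofReal_integral_eq_lintegral_ofReal hint]
    · congr 1
      have : ∫ τ in Set.Ioc s t', (τ - s) ^ k = ∫ τ in s..t', (τ - s) ^ k := by
        rw [intervalIntegral.integral_of_le h]
      rw [this, intervalIntegral.integral_comp_sub_right (fun u => u ^ k) s, integral_pow]
      rw [abs_of_nonneg (by linarith : (0:ℝ) ≤ t' - s)]
      simp
    · filter_upwards [MeasureTheory.ae_restrict_mem measurableSet_Ioc] with τ hτ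
      exact pow_nonneg (by linarith [hτ.1]) k
  · rw [Set.uIoc_of_ge h]
    have hcongr : ∫⁻ τ in Set.Ioc t' s, ENNReal.ofReal (|τ - s| ^ k)
        = ∫⁻ τ in Set.Ioc t' s, ENNReal.ofReal ((s - τ) ^ k) := by
      refine setLIntegral_congr_fun measurableSet_Ioc ?_
      intro τ hτ; dsimp only
      rw [abs_of_nonpos (by linarith [hτ.2] : τ - s ≤ (0:ℝ)), neg_sub]
    rw [hcongr]
    have hint : IntegrableOn (fun τ => (s - τ) ^ k) (Set.Ioc t' s) := by
      exact ((continuous_const.sub continuous_id).pow k : Continuous fun τ : ℝ => (s - τ)^k)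
        |>.integrableOn_Ioc
    rw [← MeasureTheory.ofReal_integral_eq_lintegral_ofReal hint]
    · congr 1
      have : ∫ τ in Set.Ioc t' s, (s - τ) ^ k = ∫ τ in t'..s, (s - τ) ^ k := by
        rw [intervalIntegral.integral_of_le h]
      rw [this, intervalIntegral.integral_comp_sub_left (fun u => u ^ k) s, integral_pow]
      rw [abs_of_nonpos (by linarith : t' - s ≤ (0:ℝ)), neg_sub]
      simp
    · filter_upwards [MeasureTheory.ae_restrict_mem measurableSet_Ioc] with τ hτ
      exact pow_nonneg (by linarith [hτ.2]) k

lemma ofReal_abs_intervalIntegral (f : ℝ → ℝ) (hf : Continuous f) (h0 : ∀ τ, 0 ≤ f τ)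
    (s t' : ℝ) :
    ENNReal.ofReal |∫ τ in s..t', f τ|
      = ∫⁻ τ in Set.uIoc s t', ENNReal.ofReal (f τ) := by
  have key : ∀ a b : ℝ, a ≤ b →
      ENNReal.ofReal (∫ τ in Set.Ioc a b, f τ) = ∫⁻ τ in Set.Ioc a b, ENNReal.ofReal (f τ) := by
    intro a b _
    exact MeasureTheory.ofReal_integral_eq_lintegral_ofReal hf.integrableOn_Ioc
      (Filter.Eventually.of_forall h0)
  rcases le_total s t' with h | h
  · rw [Set.uIoc_of_le h, intervalIntegral.integral_of_le h,
      abs_of_nonneg (MeasureTheory.setIntegral_nonneg measurableSet_Ioc fun τ _ => h0 τ),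
      key s t' h]
  · rw [Set.uIoc_of_ge h, intervalIntegral.integral_of_ge h, abs_neg,
      abs_of_nonneg (MeasureTheory.setIntegral_nonneg measurableSet_Ioc fun τ _ => h0 τ),
      key t' s h]

lemma step_real (v c : ℝ) (k : ℕ) :
    v * (v ^ k / k.factorial) * (c ^ (k + 1) / (k + 1)) = (v * c) ^ (k + 1) / (k + 1).factorial := by
  have h1 : (k.factorial : ℝ) ≠ 0 := Nat.cast_ne_zero.mpr k.factorial_ne_zero
  have h2 : ((k : ℝ) + 1) ≠ 0 := by positivity
  rw [Nat.factorial_succ, mul_pow]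
  push_cast
  field_simp
  ring

noncomputable def kerCLM {d : ℕ} (x z : Fin d → ℤ) :
    (lp (fun _ : Fin d → ℤ => ℂ) 2 →L[ℂ] lp (fun _ : Fin d → ℤ => ℂ) 2) →L[ℂ] ℂ :=
  (evalCLM x).comp ((ContinuousLinearMap.apply ℂ (lp (fun _ : Fin d → ℤ => ℂ) 2)) (lp.single 2 z 1))

@[simp] lemma kerCLM_apply {d : ℕ} (x z : Fin d → ℤ)
    (T : lp (fun _ : Fin d → ℤ => ℂ) 2 →L[ℂ] lp (fun _ : Fin d → ℤ => ℂ) 2) :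
    kerCLM x z T = opKernel T x z := rfl

lemma continuous_opKernel {d : ℕ} {α : Type*} [TopologicalSpace α]
    {F : α → lp (fun _ : Fin d → ℤ => ℂ) 2 →L[ℂ] lp (fun _ : Fin d → ℤ => ℂ) 2}
    (hF : Continuous F) (x z : Fin d → ℤ) :
    Continuous fun τ => opKernel (F τ) x z :=
  (kerCLM x z).continuous.comp hF

set_option maxHeartbeats 4000000 in
/-- Finite group velocity: if `i ∂ₜ U(t,s) = H(t) U(t,s)`, `U(s,s) = I`,
`H(t)` has real diagonal and `∑_{x ≠ y} e^{m‖x−y‖₁}|H(t)(x,y)| ≤ v` uniformly, then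
`∑_x e^{m‖x−y‖₁}|U(t,s)(x,y)| ≤ e^{v|t−s|}`. -/
theorem stmt_7 {d : ℕ} (hd : 1 ≤ d) (m : ℝ) (hm : 0 < m)
    (H : ℝ → lp (fun _ : Fin d → ℤ => ℂ) 2 →L[ℂ] lp (fun _ : Fin d → ℤ => ℂ) 2)
    (hHcont : Continuous H)
    (hHdiag : ∀ (t : ℝ) (x : Fin d → ℤ), (opKernel (H t) x x).im = 0)
    (v : ℝ)
    (hHsummable : ∀ (t : ℝ) (y : Fin d → ℤ),
      Summable (fun x : Fin d → ℤ =>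
        if x = y then 0 else Real.exp (m * normOne (x - y)) * ‖opKernel (H t) x y‖))
    (hHv : ∀ (t : ℝ) (y : Fin d → ℤ),
      (∑' x : Fin d → ℤ,
        if x = y then 0 else Real.exp (m * normOne (x - y)) * ‖opKernel (H t) x y‖) ≤ v)
    (U : ℝ → ℝ → lp (fun _ : Fin d → ℤ => ℂ) 2 →L[ℂ] lp (fun _ : Fin d → ℤ => ℂ) 2)
    (hU0 : ∀ s : ℝ, U s s = ContinuousLinearMap.id ℂ _)
    (hUderiv : ∀ s t : ℝ, HasDerivAt (fun τ => U τ s) ((-Complex.I) • ((H t).comp (U t s))) t)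
    (s t : ℝ) (y : Fin d → ℤ) :
    Summable (fun x : Fin d → ℤ => Real.exp (m * normOne (x - y)) * ‖opKernel (U t s) x y‖) ∧
      (∑' x : Fin d → ℤ, Real.exp (m * normOne (x - y)) * ‖opKernel (U t s) x y‖) ≤
        Real.exp (v * |t - s|) := by
  classical
  have hv0 : 0 ≤ v := by
    refine le_trans (tsum_nonneg fun x => ?_) (hHv s y)
    by_cases h : x = y <;> simp [h]
    positivity
  -- weights
  set θ : ℕ → ℝ → ℝ := fun n ρ => min ρ (2 * n - ρ) with hθdef
  set wn : ℕ → (Fin d → ℤ) → ℝ := fun n x => Real.exp (m * θ n (normOne (x - y))) with hwndef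
  have hwn_pos : ∀ n x, 0 < wn n x := fun n x => Real.exp_pos _
  have hwn_y : ∀ n, wn n y = 1 := by
    intro n
    have h0 : min (0:ℝ) (2 * n - 0) = 0 := by
      rw [sub_zero]; exact min_eq_left (by positivity)
    simp [hwndef, hθdef, h0]
  have hwn_lip : ∀ n (x z : Fin d → ℤ),
      wn n x ≤ wn n z * Real.exp (m * normOne (x - z)) := by
    intro n x z
    rw [hwndef, ← Real.exp_add]
    apply Real.exp_le_exp.mpr
    have htri : |normOne (x - y) - normOne (z - y)| ≤ normOne (x - z) := abs_normOne_sub x z y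
    have h1 : θ n (normOne (x - y)) ≤ θ n (normOne (z - y)) + normOne (x - z) := by
      simp only [hθdef]
      rcases abs_le.mp htri with ⟨hl, hr⟩
      rcases le_total (normOne (z - y)) (2 * n - normOne (z - y)) with hc | hc
      · rw [min_eq_left hc]
        exact le_trans (min_le_left _ _) (by linarith)
      · rw [min_eq_right hc]
        exact le_trans (min_le_right _ _) (by linarith)
    nlinarith [le_of_lt hm]
  have hwn_eq : ∀ (n : ℕ) (x : Fin d → ℤ), normOne (x - y) ≤ n →
      wn n x = Real.exp (m * normOne (x - y)) := by
    intro n x h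
    simp only [hwndef, hθdef]
    rw [min_eq_left (by linarith [normOne_nonneg (x - y)] : normOne (x - y) ≤ 2 * n - normOne (x - y))]
  have hwn_le : ∀ (n : ℕ) (z : Fin d → ℤ),
      wn n z ≤ Real.exp (2 * m * n) * Real.exp (-(m * normOne (z - y))) := by
    intro n z
    rw [hwndef, ← Real.exp_add]
    apply Real.exp_le_exp.mpr
    have : θ n (normOne (z - y)) ≤ 2 * n - normOne (z - y) := min_le_right _ _
    nlinarith [le_of_lt hm]
  -- the column of U
  set u : (Fin d → ℤ) → ℝ → ℂ := fun x τ => opKernel (U τ s) x y with hudef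
  have hUcont : Continuous (fun τ => U τ s) :=
    continuous_iff_continuousAt.mpr fun τ => (hUderiv s τ).continuousAt
  have hu_deriv : ∀ x τ, HasDerivAt (u x)
      (-Complex.I * opKernel ((H τ).comp (U τ s)) x y) τ := by
    intro x τ
    have h := ((kerCLM x y).restrictScalars ℝ).hasFDerivAt.comp_hasDerivAt τ (hUderiv s τ)
    have heq : ((kerCLM x y).restrictScalars ℝ) ((-Complex.I) • ((H τ).comp (U τ s)))
        = -Complex.I * opKernel ((H τ).comp (U τ s)) x y := by
      rw [ContinuousLinearMap.coe_restrictScalars', _root_.map_smul, smul_eq_mul, kerCLM_apply]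
    rw [heq] at h
    exact h
  have hu_cont : ∀ x, Continuous (u x) := fun x =>
    continuous_iff_continuousAt.mpr fun τ => (hu_deriv x τ).continuousAt
  have hu_le : ∀ x τ, ‖u x τ‖ ≤ ‖U τ s‖ := by
    intro x τ
    calc ‖u x τ‖ ≤ ‖(U τ s) (lp.single 2 y 1)‖ :=
          lp.norm_apply_le_norm two_ne_zero ((U τ s) (lp.single 2 y 1)) x
      _ ≤ ‖U τ s‖ * ‖(lp.single 2 y (1:ℂ) : lp (fun _ : Fin d → ℤ => ℂ) 2)‖ :=
          (U τ s).le_opNorm _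
      _ = ‖U τ s‖ := by
          have h1 := lp.norm_single (p := 2) (E := fun _ : Fin d → ℤ => ℂ)
            (by norm_num) y (1:ℂ)
          simp only [norm_one] at h1
          rw [h1, mul_one]
  -- diagonal of H
  set a : (Fin d → ℤ) → ℝ → ℝ := fun x τ => (opKernel (H τ) x x).re with hadef
  have ha_cont : ∀ x, Continuous (a x) := fun x =>
    Complex.continuous_re.comp (continuous_opKernel hHcont x x)
  have ha_diag : ∀ x τ, opKernel (H τ) x x = ((a x τ : ℝ) : ℂ) := by
    intro x τ
    exact Complex.ext rfl (by simpa using hHdiag τ x)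
  -- remainder
  set r : (Fin d → ℤ) → ℝ → ℂ :=
    fun x τ => opKernel ((H τ).comp (U τ s)) x y - (a x τ : ℂ) * u x τ with hrdef
  have hr_cont : ∀ x, Continuous (r x) := by
    intro x
    exact (continuous_opKernel (hHcont.clm_comp hUcont) x y).sub
      ((Complex.continuous_ofReal.comp (ha_cont x)).mul (hu_cont x))
  have hkey : ∀ x t', ‖u x t'‖ ≤ ‖u x s‖ + |∫ τ in s..t', ‖r x τ‖| := by
    intro x t'
    set φ : ℝ → ℝ := fun t'' => ∫ τ in s..t'', a x τ with hφdef
    have hφd : ∀ τ0, HasDerivAt φ (a x τ0) τ0 := by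
      intro τ0
      exact intervalIntegral.integral_hasDerivAt_right
        ((ha_cont x).intervalIntegrable s τ0)
        ((ha_cont x).stronglyMeasurableAtFilter _ _)
        (ha_cont x).continuousAt
    have hφcont : Continuous φ :=
      continuous_iff_continuousAt.mpr fun τ0 => (hφd τ0).continuousAt
    set g : ℝ → ℂ := fun τ0 => Complex.exp (Complex.I * φ τ0) * u x τ0 with hgdef
    have hgd : ∀ τ0, HasDerivAt g
        (Complex.exp (Complex.I * φ τ0) * (-Complex.I * r x τ0)) τ0 := by
      intro τ0
      have h1 : HasDerivAt (fun τ1 => Complex.exp (Complex.I * (φ τ1 : ℂ)))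
          (Complex.exp (Complex.I * (φ τ0 : ℂ)) * (Complex.I * (a x τ0 : ℂ))) τ0 :=
        (((hφd τ0).ofReal_comp).const_mul Complex.I).cexp
      have h2 := hu_deriv x τ0
      have h3 := h1.mul h2
      refine h3.congr_deriv ?_
      simp only [hrdef]
      ring
    have hgs : ∀ τ0, ‖g τ0‖ = ‖u x τ0‖ := by
      intro τ0
      simp only [hgdef, norm_mul, Complex.norm_exp]
      have : (Complex.I * (φ τ0 : ℂ)).re = 0 := by simp
      rw [this, Real.exp_zero, one_mul]
    have hintcont : Continuous fun τ => Complex.exp (Complex.I * (φ τ : ℂ)) * (-Complex.I * r x τ) :=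
      (Complex.continuous_exp.comp (continuous_const.mul
        (Complex.continuous_ofReal.comp hφcont))).mul (continuous_const.mul (hr_cont x))
    have hftc : ∫ τ in s..t', Complex.exp (Complex.I * (φ τ : ℂ)) * (-Complex.I * r x τ)
        = g t' - g s :=
      intervalIntegral.integral_eq_sub_of_hasDerivAt (fun τ0 _ => hgd τ0)
        (hintcont.intervalIntegrable s t')
    calc ‖u x t'‖ = ‖g t'‖ := (hgs t').symm
      _ ≤ ‖g s‖ + ‖g t' - g s‖ := by
          have h := norm_sub_norm_le (g t') (g s)
          linarith
      _ = ‖u x s‖ + ‖∫ τ in s..t', Complex.exp (Complex.I * (φ τ : ℂ)) * (-Complex.I * r x τ)‖ := by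
          rw [hgs s, hftc]
      _ ≤ ‖u x s‖ + |∫ τ in s..t', ‖Complex.exp (Complex.I * (φ τ : ℂ)) * (-Complex.I * r x τ)‖| :=
          add_le_add_right intervalIntegral.norm_integral_le_abs_integral_norm _
      _ = ‖u x s‖ + |∫ τ in s..t', ‖r x τ‖| := by
          congr 1
          apply congrArg
          refine intervalIntegral.integral_congr fun τ _ => ?_
          simp only [norm_mul, Complex.norm_exp]
          have h0 : (Complex.I * (φ τ : ℂ)).re = 0 := by simp
          rw [h0, Real.exp_zero, one_mul]
          simp
  have hu_s : ∀ x : Fin d → ℤ, (‖u x s‖₊ : ENNReal) = if x = y then 1 else 0 := by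
    intro x
    have : u x s = if x = y then 1 else 0 := by
      simp only [hudef, hU0 s, opKernel]
      rw [ContinuousLinearMap.id_apply]
      by_cases h : x = y <;> simp [lp.single_apply, h]
    rw [this]
    by_cases h : x = y <;> simp [h]
  have hr_bound : ∀ x τ, (‖r x τ‖₊ : ENNReal) ≤
      ∑' z, (if x = z then 0 else (‖opKernel (H τ) x z‖₊ : ENNReal) * ‖u z τ‖₊) := by
    intro x τ
    have hcomp := hasSum_opKernel_comp (H τ) (U τ s) x y
    have hdiag : HasSum (fun z : Fin d → ℤ =>
        if z = x then opKernel (H τ) x x * u x τ else 0) (opKernel (H τ) x x * u x τ) :=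
      hasSum_ite_eq x _
    have hsub := hcomp.sub hdiag
    have hfun : (fun z => opKernel (H τ) x z * opKernel (U τ s) z y -
        if z = x then opKernel (H τ) x x * u x τ else 0)
        = fun z => if x = z then 0 else opKernel (H τ) x z * u z τ := by
      funext z
      by_cases h : z = x
      · subst h; simp [hudef]
      · rw [if_neg h, if_neg (fun hh => h hh.symm)]
        simp [hudef]
    rw [hfun] at hsub
    have hval : opKernel ((H τ).comp (U τ s)) x y - opKernel (H τ) x x * u x τ = r x τ := by
      rw [hrdef, ha_diag x τ]
    rw [hval] at hsub
    refine le_trans (enorm_hasSum_le hsub) (le_of_eq (tsum_congr fun z => ?_))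
    by_cases h : x = z
    · simp [h]
    · simp only [h, if_false]
      rw [nnnorm_mul, ENNReal.coe_mul]
  have hcol : ∀ τ (z : Fin d → ℤ),
      (∑' x, (if x = z then 0 else
        ENNReal.ofReal (Real.exp (m * normOne (x - z))) * (‖opKernel (H τ) x z‖₊ : ENNReal)))
        ≤ ENNReal.ofReal v := by
    intro τ z
    have h1 := hHsummable τ z
    have heq : (∑' x, (if x = z then 0 else
        ENNReal.ofReal (Real.exp (m * normOne (x - z))) * (‖opKernel (H τ) x z‖₊ : ENNReal)))
        = ENNReal.ofReal (∑' x : Fin d → ℤ,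
          if x = z then 0 else Real.exp (m * normOne (x - z)) * ‖opKernel (H τ) x z‖) := by
      rw [ENNReal.ofReal_tsum_of_nonneg (fun x => by positivity) h1]
      refine tsum_congr fun x => ?_
      by_cases h : x = z
      · simp [h]
      · simp only [h, if_false]
        rw [ENNReal.ofReal_mul (Real.exp_nonneg _), ofReal_norm_eq_coe_nnnorm]
    rw [heq]
    exact ENNReal.ofReal_le_ofReal (hHv τ z)
  -- the weighted sums
  set G : ℕ → ℝ → ENNReal :=
    fun n τ => ∑' z, ENNReal.ofReal (wn n z) * (‖u z τ‖₊ : ENNReal) with hGdef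
  have hG_meas : ∀ n, Measurable (G n) := by
    intro n
    refine Measurable.ennreal_tsum fun z => ?_
    exact measurable_const.mul
      ((ENNReal.continuous_coe.comp (continuous_nnnorm.comp (hu_cont z))).measurable)
  -- a priori bound on compact interval
  obtain ⟨C, hC0, hC⟩ : ∃ C : ℝ, 0 ≤ C ∧ ∀ τ ∈ Set.uIcc s t, ‖U τ s‖ ≤ C := by
    obtain ⟨τ0, hτ0, hmax⟩ := isCompact_uIcc.exists_isMaxOn Set.nonempty_uIcc
      ((continuous_norm.comp hUcont).continuousOn (s := Set.uIcc s t))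
    exact ⟨max ‖U τ0 s‖ 0, le_max_right _ _,
      fun τ hτ => le_trans (hmax hτ) (le_max_left _ _)⟩
  have hSg_sum : Summable (fun z : Fin d → ℤ => Real.exp (-(m * normOne (z - y)))) :=
    (Equiv.subRight y).summable_iff.mpr (summable_exp_neg_normOne m hm)
  set Sg : ℝ := ∑' z : Fin d → ℤ, Real.exp (-(m * normOne (z - y))) with hSgdef
  set B : ℕ → ENNReal := fun n => ENNReal.ofReal (Real.exp (2 * m * n) * C * Sg) with hBdef
  have hGB : ∀ n, ∀ τ ∈ Set.uIcc s t, G n τ ≤ B n := by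
    intro n τ hτ
    have hstep : ∀ z : Fin d → ℤ, ENNReal.ofReal (wn n z) * (‖u z τ‖₊ : ENNReal)
        ≤ ENNReal.ofReal ((Real.exp (2 * m * n) * C) * Real.exp (-(m * normOne (z - y)))) := by
      intro z
      have h1 : (‖u z τ‖₊ : ENNReal) ≤ ENNReal.ofReal C := by
        rw [← ofReal_norm_eq_coe_nnnorm]
        exact ENNReal.ofReal_le_ofReal (le_trans (hu_le z τ) (hC τ hτ))
      calc ENNReal.ofReal (wn n z) * (‖u z τ‖₊ : ENNReal)
          ≤ ENNReal.ofReal (Real.exp (2 * m * n) * Real.exp (-(m * normOne (z - y))))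
            * ENNReal.ofReal C :=
            mul_le_mul' (ENNReal.ofReal_le_ofReal (hwn_le n z)) h1
        _ = ENNReal.ofReal ((Real.exp (2 * m * n) * C) * Real.exp (-(m * normOne (z - y)))) := by
            rw [← ENNReal.ofReal_mul (by positivity)]
            ring_nf
    calc G n τ ≤ ∑' z : Fin d → ℤ,
        ENNReal.ofReal ((Real.exp (2 * m * n) * C) * Real.exp (-(m * normOne (z - y)))) :=
          ENNReal.tsum_le_tsum hstep
      _ = ENNReal.ofReal (Real.exp (2 * m * n) * C)
            * ∑' z : Fin d → ℤ, ENNReal.ofReal (Real.exp (-(m * normOne (z - y)))) := by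
          rw [← ENNReal.tsum_mul_left]
          refine tsum_congr fun z => ?_
          rw [← ENNReal.ofReal_mul (by positivity)]
      _ = B n := by
          rw [hBdef, ← ENNReal.ofReal_tsum_of_nonneg (fun z => Real.exp_nonneg _) hSg_sum,
            ← ENNReal.ofReal_mul (by positivity), ← hSgdef]
  have hB_ne : ∀ n, B n ≠ ⊤ := fun n => ENNReal.ofReal_ne_top
  -- Gronwall-type integral inequality
  have hGron : ∀ (n : ℕ) (t' : ℝ),
      G n t' ≤ 1 + ENNReal.ofReal v * ∫⁻ τ in Set.uIoc s t', G n τ := by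
    intro n t'
    have hrmeas : ∀ x : Fin d → ℤ, Measurable fun τ => (‖r x τ‖₊ : ENNReal) :=
      fun x => (ENNReal.continuous_coe.comp (continuous_nnnorm.comp (hr_cont x))).measurable
    have step1 : ∀ x : Fin d → ℤ, (‖u x t'‖₊ : ENNReal) ≤ (if x = y then 1 else 0)
        + ∫⁻ τ in Set.uIoc s t', (‖r x τ‖₊ : ENNReal) := by
      intro x
      have h2 : ENNReal.ofReal ‖u x t'‖
          ≤ ENNReal.ofReal (‖u x s‖ + |∫ τ in s..t', ‖r x τ‖|) :=
        ENNReal.ofReal_le_ofReal (hkey x t')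
      rw [ENNReal.ofReal_add (norm_nonneg _) (abs_nonneg _),
        ofReal_abs_intervalIntegral _ ((hr_cont x).norm) (fun τ => norm_nonneg _) s t'] at h2
      calc (‖u x t'‖₊ : ENNReal) = ENNReal.ofReal ‖u x t'‖ := (ofReal_norm_eq_coe_nnnorm _).symm
        _ ≤ ENNReal.ofReal ‖u x s‖ + ∫⁻ τ in Set.uIoc s t', ENNReal.ofReal ‖r x τ‖ := h2
        _ = (if x = y then 1 else 0) + ∫⁻ τ in Set.uIoc s t', (‖r x τ‖₊ : ENNReal) := by
            rw [ofReal_norm_eq_coe_nnnorm, hu_s x]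
            congr 1
            exact lintegral_congr fun τ => ofReal_norm_eq_coe_nnnorm _
    have step2 : ∀ (τ : ℝ) (S : Finset (Fin d → ℤ)),
        ∑ x ∈ S, ENNReal.ofReal (wn n x) * (‖r x τ‖₊ : ENNReal)
          ≤ ENNReal.ofReal v * G n τ := by
      intro τ S
      have perz : ∀ z : Fin d → ℤ,
          ∑ x ∈ S, ENNReal.ofReal (wn n x)
            * (if x = z then 0 else (‖opKernel (H τ) x z‖₊ : ENNReal) * ‖u z τ‖₊)
          ≤ ENNReal.ofReal (wn n z) * ENNReal.ofReal v * (‖u z τ‖₊ : ENNReal) := by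
        intro z
        have hre : ∀ x : Fin d → ℤ, ENNReal.ofReal (wn n x)
              * (if x = z then 0 else (‖opKernel (H τ) x z‖₊ : ENNReal) * ‖u z τ‖₊)
            = (if x = z then 0
                else ENNReal.ofReal (wn n x) * (‖opKernel (H τ) x z‖₊ : ENNReal))
              * (‖u z τ‖₊ : ENNReal) := by
          intro x
          by_cases h : x = z
          · simp [h]
          · simp only [h, if_false]
            ring
        rw [Finset.sum_congr rfl fun x _ => hre x, ← Finset.sum_mul]
        refine mul_le_mul' ?_ le_rfl
        calc ∑ x ∈ S, (if x = z then 0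
              else ENNReal.ofReal (wn n x) * (‖opKernel (H τ) x z‖₊ : ENNReal))
            ≤ ∑ x ∈ S, ENNReal.ofReal (wn n z) * (if x = z then 0
                else ENNReal.ofReal (Real.exp (m * normOne (x - z)))
                  * (‖opKernel (H τ) x z‖₊ : ENNReal)) := by
              refine Finset.sum_le_sum fun x _ => ?_
              by_cases h : x = z
              · simp [h]
              · simp only [h, if_false]
                rw [← mul_assoc]
                refine mul_le_mul' ?_ le_rfl
                rw [← ENNReal.ofReal_mul (le_of_lt (hwn_pos n z))]
                exact ENNReal.ofReal_le_ofReal (hwn_lip n x z)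
          _ = ENNReal.ofReal (wn n z) * ∑ x ∈ S, (if x = z then 0
                else ENNReal.ofReal (Real.exp (m * normOne (x - z)))
                  * (‖opKernel (H τ) x z‖₊ : ENNReal)) := (Finset.mul_sum _ _ _).symm
          _ ≤ ENNReal.ofReal (wn n z) * ENNReal.ofReal v :=
              mul_le_mul' le_rfl (le_trans (ENNReal.sum_le_tsum S) (hcol τ z))
      calc ∑ x ∈ S, ENNReal.ofReal (wn n x) * (‖r x τ‖₊ : ENNReal)
          ≤ ∑ x ∈ S, ∑' z, ENNReal.ofReal (wn n x) * (if x = z then 0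
              else (‖opKernel (H τ) x z‖₊ : ENNReal) * ‖u z τ‖₊) := by
            refine Finset.sum_le_sum fun x _ => ?_
            rw [ENNReal.tsum_mul_left]
            exact mul_le_mul' le_rfl (hr_bound x τ)
        _ = ∑' z, ∑ x ∈ S, ENNReal.ofReal (wn n x) * (if x = z then 0
              else (‖opKernel (H τ) x z‖₊ : ENNReal) * ‖u z τ‖₊) := by
            rw [← Finset.tsum_subtype S]
            rw [ENNReal.tsum_comm]
            exact tsum_congr fun z => Finset.tsum_subtype S
              (fun x => ENNReal.ofReal (wn n x) * (if x = z then 0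
                else (‖opKernel (H τ) x z‖₊ : ENNReal) * ‖u z τ‖₊))
        _ ≤ ∑' z, ENNReal.ofReal (wn n z) * ENNReal.ofReal v * (‖u z τ‖₊ : ENNReal) :=
            ENNReal.tsum_le_tsum perz
        _ = ENNReal.ofReal v * G n τ := by
            rw [← ENNReal.tsum_mul_left]
            exact tsum_congr fun z => by ring
    calc G n t' = ⨆ S : Finset (Fin d → ℤ),
        ∑ x ∈ S, ENNReal.ofReal (wn n x) * (‖u x t'‖₊ : ENNReal) := ENNReal.tsum_eq_iSup_sum
      _ ≤ 1 + ENNReal.ofReal v * ∫⁻ τ in Set.uIoc s t', G n τ := by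
        refine iSup_le fun S => ?_
        calc ∑ x ∈ S, ENNReal.ofReal (wn n x) * (‖u x t'‖₊ : ENNReal)
            ≤ ∑ x ∈ S, ENNReal.ofReal (wn n x) * ((if x = y then 1 else 0)
                + ∫⁻ τ in Set.uIoc s t', (‖r x τ‖₊ : ENNReal)) :=
              Finset.sum_le_sum fun x _ => mul_le_mul' le_rfl (step1 x)
          _ = (∑ x ∈ S, ENNReal.ofReal (wn n x) * (if x = y then 1 else 0))
                + ∑ x ∈ S, ENNReal.ofReal (wn n x)
                  * ∫⁻ τ in Set.uIoc s t', (‖r x τ‖₊ : ENNReal) := by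
              rw [← Finset.sum_add_distrib]
              exact Finset.sum_congr rfl fun x _ => mul_add _ _ _
          _ ≤ 1 + ENNReal.ofReal v * ∫⁻ τ in Set.uIoc s t', G n τ := by
              refine add_le_add ?_ ?_
              · have hco : ∀ x ∈ S, ENNReal.ofReal (wn n x) * (if x = y then 1 else 0)
                    = if x = y then ENNReal.ofReal (wn n x) else 0 := fun x _ => by
                  by_cases h : x = y <;> simp [h]
                rw [Finset.sum_congr rfl hco,
                  Finset.sum_ite_eq' S y (fun x => ENNReal.ofReal (wn n x))]
                split
                · rw [hwn_y n, ENNReal.ofReal_one]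
                · exact zero_le_one
              · have hmx : ∀ x ∈ S, Measurable fun τ =>
                    ENNReal.ofReal (wn n x) * (‖r x τ‖₊ : ENNReal) :=
                  fun x _ => (hrmeas x).const_mul _
                calc ∑ x ∈ S, ENNReal.ofReal (wn n x)
                      * ∫⁻ τ in Set.uIoc s t', (‖r x τ‖₊ : ENNReal)
                    = ∫⁻ τ in Set.uIoc s t',
                        ∑ x ∈ S, ENNReal.ofReal (wn n x) * (‖r x τ‖₊ : ENNReal) := by
                      rw [MeasureTheory.lintegral_finset_sum S hmx]
                      exact Finset.sum_congr rfl fun x _ =>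
                        (MeasureTheory.lintegral_const_mul _ (hrmeas x)).symm
                  _ ≤ ∫⁻ τ in Set.uIoc s t', ENNReal.ofReal v * G n τ :=
                      MeasureTheory.lintegral_mono fun τ => step2 τ S
                  _ = ENNReal.ofReal v * ∫⁻ τ in Set.uIoc s t', G n τ :=
                      MeasureTheory.lintegral_const_mul _ (hG_meas n)
  -- iteration
  have hiter : ∀ (n N : ℕ), ∀ t' ∈ Set.uIcc s t,
      G n t' ≤ (∑ k ∈ Finset.range N, ENNReal.ofReal ((v * |t' - s|) ^ k / k.factorial))
        + B n * ENNReal.ofReal ((v * |t' - s|) ^ N / N.factorial) := by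
    intro n N
    induction N with
    | zero =>
        intro t' ht'
        simpa using hGB n t' ht'
    | succ N ih =>
        intro t' ht'
        refine le_trans (hGron n t') ?_
        have hsub : Set.uIoc s t' ⊆ Set.uIcc s t := fun τ hτ =>
          Set.uIcc_subset_uIcc Set.left_mem_uIcc ht' (Set.uIoc_subset_uIcc hτ)
        set F : ℝ → ENNReal := fun τ =>
          (∑ k ∈ Finset.range N, ENNReal.ofReal (v ^ k / k.factorial)
              * ENNReal.ofReal (|τ - s| ^ k))
            + (B n * ENNReal.ofReal (v ^ N / N.factorial)) * ENNReal.ofReal (|τ - s| ^ N)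
          with hFdef
        have habs : ∀ (c : ℝ) (k : ℕ), ENNReal.ofReal ((v * |c|) ^ k / k.factorial)
            = ENNReal.ofReal (v ^ k / k.factorial) * ENNReal.ofReal (|c| ^ k) := by
          intro c k
          rw [← ENNReal.ofReal_mul (by positivity)]
          congr 1
          rw [mul_pow]
          ring
        have hptwise : ∀ τ ∈ Set.uIoc s t', G n τ ≤ F τ := by
          intro τ hτ
          refine le_trans (ih τ (hsub hτ)) (le_of_eq ?_)
          rw [hFdef]
          congr 1
          · exact Finset.sum_congr rfl fun k _ => habs (τ - s) k
          · rw [habs (τ - s) N, mul_assoc]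
        have hmeask : ∀ k : ℕ, Measurable fun τ : ℝ => ENNReal.ofReal (|τ - s| ^ k) := by
          intro k
          exact (ENNReal.continuous_ofReal.comp
            (((continuous_id.sub continuous_const).abs.pow k))).measurable
        have hFmeas1 : ∀ k ∈ Finset.range N, Measurable fun τ : ℝ =>
            ENNReal.ofReal (v ^ k / k.factorial) * ENNReal.ofReal (|τ - s| ^ k) :=
          fun k _ => (hmeask k).const_mul _
        have hFint : ∫⁻ τ in Set.uIoc s t', F τ
            = (∑ k ∈ Finset.range N, ENNReal.ofReal (v ^ k / k.factorial)
                * ENNReal.ofReal (|t' - s| ^ (k + 1) / (k + 1)))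
              + (B n * ENNReal.ofReal (v ^ N / N.factorial))
                * ENNReal.ofReal (|t' - s| ^ (N + 1) / (N + 1)) := by
          rw [hFdef]
          rw [MeasureTheory.lintegral_add_right _ ((hmeask N).const_mul _)]
          rw [MeasureTheory.lintegral_finset_sum _ hFmeas1]
          rw [MeasureTheory.lintegral_const_mul _ (hmeask N), lint_abs_pow]
          congr 1
          refine Finset.sum_congr rfl fun k _ => ?_
          rw [MeasureTheory.lintegral_const_mul _ (hmeask k), lint_abs_pow]
        have hFmeas : Measurable F := by
          rw [hFdef]
          exact (Finset.measurable_sum _ hFmeas1).add (((hmeask N)).const_mul _)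
        calc 1 + ENNReal.ofReal v * ∫⁻ τ in Set.uIoc s t', G n τ
            ≤ 1 + ENNReal.ofReal v * ∫⁻ τ in Set.uIoc s t', F τ :=
              add_le_add_right (mul_le_mul' le_rfl
                (MeasureTheory.setLIntegral_mono hFmeas hptwise)) 1
          _ = (∑ k ∈ Finset.range (N + 1), ENNReal.ofReal ((v * |t' - s|) ^ k / k.factorial))
              + B n * ENNReal.ofReal ((v * |t' - s|) ^ (N + 1) / (N + 1).factorial) := by
            rw [hFint, mul_add, Finset.mul_sum]
            have hterm : ∀ k : ℕ, ENNReal.ofReal v * (ENNReal.ofReal (v ^ k / k.factorial)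
                * ENNReal.ofReal (|t' - s| ^ (k + 1) / (k + 1)))
                = ENNReal.ofReal ((v * |t' - s|) ^ (k + 1) / (k + 1).factorial) := by
              intro k
              rw [← mul_assoc, ← ENNReal.ofReal_mul hv0, ← ENNReal.ofReal_mul (by positivity)]
              congr 1
              rw [← step_real v |t' - s| k]
            rw [Finset.sum_congr rfl fun k _ => hterm k]
            rw [Finset.sum_range_succ' (fun k => ENNReal.ofReal ((v * |t' - s|) ^ k / k.factorial)) N]
            have h0 : ENNReal.ofReal ((v * |t' - s|) ^ 0 / (0).factorial) = 1 := by
              norm_num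
            rw [h0]
            have htail : ENNReal.ofReal v * ((B n * ENNReal.ofReal (v ^ N / N.factorial))
                * ENNReal.ofReal (|t' - s| ^ (N + 1) / (N + 1)))
                = B n * ENNReal.ofReal ((v * |t' - s|) ^ (N + 1) / (N + 1).factorial) := by
              rw [← hterm N]
              ring
            rw [htail]
            ring
  have hfinal : ∀ n, G n t ≤ ENNReal.ofReal (Real.exp (v * |t - s|)) := by
    intro n
    have hx0 : (0:ℝ) ≤ v * |t - s| := by positivity
    have hboundN : ∀ N : ℕ, G n t ≤ ENNReal.ofReal (Real.exp (v * |t - s|))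
        + B n * ENNReal.ofReal ((v * |t - s|) ^ N / N.factorial) := by
      intro N
      refine le_trans (hiter n N t Set.right_mem_uIcc) (add_le_add ?_ le_rfl)
      rw [← ENNReal.ofReal_sum_of_nonneg (fun k _ => by positivity)]
      exact ENNReal.ofReal_le_ofReal (Real.sum_le_exp_of_nonneg hx0 N)
    have h1 : Filter.Tendsto (fun N : ℕ => ((v * |t - s|) ^ N / N.factorial : ℝ))
        Filter.atTop (nhds 0) := FloorSemiring.tendsto_pow_div_factorial_atTop _
    have h2 : Filter.Tendsto (fun N : ℕ => ENNReal.ofReal ((v * |t - s|) ^ N / N.factorial))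
        Filter.atTop (nhds 0) := by
      have := ENNReal.tendsto_ofReal h1
      simpa using this
    have h3 : Filter.Tendsto (fun N : ℕ => ENNReal.ofReal (Real.exp (v * |t - s|))
        + B n * ENNReal.ofReal ((v * |t - s|) ^ N / N.factorial)) Filter.atTop
        (nhds (ENNReal.ofReal (Real.exp (v * |t - s|)))) := by
      have h4 := ENNReal.Tendsto.const_mul h2 (Or.inr (hB_ne n))
      rw [mul_zero] at h4
      simpa using Filter.Tendsto.const_add (ENNReal.ofReal (Real.exp (v * |t - s|))) h4
    exact ge_of_tendsto' h3 hboundN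
  -- conclusion
  have hS : ∀ S : Finset (Fin d → ℤ),
      ∑ x ∈ S, Real.exp (m * normOne (x - y)) * ‖opKernel (U t s) x y‖
        ≤ Real.exp (v * |t - s|) := by
    intro S
    obtain ⟨n, hn⟩ : ∃ n : ℕ, ∀ x ∈ S, normOne (x - y) ≤ n := by
      obtain ⟨M, hM⟩ := (S.image fun x => normOne (x - y)).exists_le
      obtain ⟨n, hn⟩ := exists_nat_ge M
      exact ⟨n, fun x hx => le_trans (hM _ (Finset.mem_image_of_mem _ hx)) hn⟩
    have h1 : (∑ x ∈ S, ENNReal.ofReal (Real.exp (m * normOne (x - y))) * (‖u x t‖₊ : ENNReal))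
        ≤ ENNReal.ofReal (Real.exp (v * |t - s|)) := by
      calc ∑ x ∈ S, ENNReal.ofReal (Real.exp (m * normOne (x - y))) * (‖u x t‖₊ : ENNReal)
          = ∑ x ∈ S, ENNReal.ofReal (wn n x) * (‖u x t‖₊ : ENNReal) :=
            Finset.sum_congr rfl fun x hx => by rw [hwn_eq n x (hn x hx)]
        _ ≤ G n t := ENNReal.sum_le_tsum S
        _ ≤ ENNReal.ofReal (Real.exp (v * |t - s|)) := hfinal n
    have h2 := ENNReal.toReal_mono ENNReal.ofReal_ne_top h1
    rw [ENNReal.toReal_ofReal (Real.exp_nonneg _)] at h2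
    refine le_trans (le_of_eq ?_) h2
    rw [ENNReal.toReal_sum]
    · refine Finset.sum_congr rfl fun x hx => ?_
      rw [ENNReal.toReal_mul, ENNReal.toReal_ofReal (Real.exp_nonneg _)]
      simp [hudef]
    · intro x hx
      exact ENNReal.mul_ne_top ENNReal.ofReal_ne_top ENNReal.coe_ne_top
  have hpos : ∀ x : Fin d → ℤ,
      0 ≤ Real.exp (m * normOne (x - y)) * ‖opKernel (U t s) x y‖ := fun x => by positivity
  exact ⟨summable_of_sum_le hpos hS, Summable.tsum_le_of_sum_le (summable_of_sum_le hpos hS) hS⟩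
end

section
/- Let d ≥ 1, let D be a real symmetric positive definite d×d matrix, let N ≥ 0, and for each t > 0 let p_t : ℤᵈ → [0,∞) satisfy ∑_{x} p_t(x) = N and ∑_{x} e^{λ‖x‖₁} p_t(x) < ∞ for every λ ≥ 0, so that M_t(z) = ∑_{x ∈ ℤᵈ} exp( i ∑_j z_j x_j ) p_t(x) defines an entire function of z ∈ ℂᵈ. Assume that for every compact K ⊂ ℂᵈ, sup_{z ∈ K} | M_t(z/√t) − N·exp( −(1/2) ∑_{i,j} D_{ij} z_i z_j ) | → 0 as t → ∞. Then diffusive scaling holds: lim_{t→∞} (1/t) ∑_{x ∈ ℤᵈ} ‖x‖₂² p_t(x) = N · tr(D). -/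
open MeasureTheory Filter

open Real

lemma sinh_le_mul_cosh (u : ℝ) (hu : 0 ≤ u) : Real.sinh u ≤ u * Real.cosh u := by
  have mono : MonotoneOn (fun v : ℝ => v * Real.cosh v - Real.sinh v) (Set.Ici 0) := by
    apply monotoneOn_of_deriv_nonneg (convex_Ici 0)
    · fun_prop
    · fun_prop
    · intro v hv
      have h1 : HasDerivAt (fun v : ℝ => v * Real.cosh v - Real.sinh v)
          (1 * Real.cosh v + v * Real.sinh v - Real.cosh v) v :=
        ((hasDerivAt_id v).mul (Real.hasDerivAt_cosh v)).sub (Real.hasDerivAt_sinh v)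
      rw [h1.deriv]
      have hv' : (0:ℝ) ≤ v := by simpa using interior_subset (s := Set.Ici (0:ℝ)) hv
      have : 0 ≤ v * Real.sinh v := mul_nonneg hv' (by rwa [Real.sinh_nonneg_iff])
      ring_nf
      linarith
  have := mono (Set.self_mem_Ici) (by exact hu) hu
  simp at this
  linarith

-- (A) 1 + v^2/2 ≤ cosh v
lemma one_add_sq_le_cosh (v : ℝ) : 1 + v^2/2 ≤ Real.cosh v := by
  have h : Real.cosh v = 1 + 2 * Real.sinh (v/2)^2 := by
    have := Real.cosh_two_mul (v/2)
    have h2 := Real.cosh_sq (v/2)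
    rw [show 2 * (v/2) = v by ring] at this
    rw [this, h2]; ring
  have hs : (v/2)^2 ≤ Real.sinh (v/2)^2 := by
    rcases le_or_gt 0 v with hv | hv
    · have : v/2 ≤ Real.sinh (v/2) := Real.self_le_sinh_iff.2 (by linarith)
      nlinarith [Real.sinh_nonneg_iff.2 (show (0:ℝ) ≤ v/2 by linarith)]
    · have : Real.sinh (v/2) ≤ v/2 := Real.sinh_le_self_iff.2 (by linarith)
      nlinarith [Real.sinh_nonpos_iff.2 (show v/2 ≤ (0:ℝ) by linarith)]
  nlinarith

-- cosh v - 1 ≤ (v^2/4)(cosh v + 1)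
lemma cosh_sub_one_le (v : ℝ) : Real.cosh v - 1 ≤ v^2/4 * (Real.cosh v + 1) := by
  have h : Real.cosh v = 1 + 2 * Real.sinh (v/2)^2 := by
    have := Real.cosh_two_mul (v/2)
    have h2 := Real.cosh_sq (v/2)
    rw [show 2 * (v/2) = v by ring] at this
    rw [this, h2]; ring
  have hsq : Real.sinh (v/2)^2 ≤ (v/2)^2 * Real.cosh (v/2)^2 := by
    rcases le_or_gt 0 v with hv | hv
    · have := sinh_le_mul_cosh (v/2) (by linarith)
      nlinarith [Real.sinh_nonneg_iff.2 (show (0:ℝ) ≤ v/2 by linarith),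
        Real.cosh_pos (v/2)]
    · have := sinh_le_mul_cosh (-(v/2)) (by linarith)
      rw [Real.sinh_neg, Real.cosh_neg] at this
      nlinarith [Real.sinh_nonpos_iff.2 (show v/2 ≤ (0:ℝ) by linarith),
        Real.cosh_pos (v/2)]
  have hc2 : Real.cosh (v/2)^2 = (Real.cosh v + 1)/2 := by
    have := Real.cosh_two_mul (v/2)
    have h2 := Real.cosh_sq (v/2)
    rw [show 2 * (v/2) = v by ring] at this
    rw [this, h2]; ring
  rw [h]
  nlinarith [hsq, hc2]

-- (B) cosh v - 1 - v^2/2 ≤ v^4/8 * cosh v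
lemma cosh_taylor (v : ℝ) : Real.cosh v - 1 - v^2/2 ≤ v^4/8 * Real.cosh v := by
  have h1 := cosh_sub_one_le v
  have h2 := Real.one_le_cosh v
  nlinarith [sq_nonneg v, sq_nonneg (v^2)]

lemma cosh_mul_cosh_le (a b : ℝ) (hab : 0 ≤ a * b) :
    Real.cosh a * Real.cosh b ≤ Real.cosh (a + b) := by
  rw [Real.cosh_add]
  have hs : 0 ≤ Real.sinh a * Real.sinh b := by
    rcases le_or_gt 0 a with ha | ha
    · rcases le_or_gt 0 b with hb | hb
      · exact mul_nonneg (Real.sinh_nonneg_iff.2 ha) (Real.sinh_nonneg_iff.2 hb)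
      · have ha0 : a = 0 := by nlinarith
        simp [ha0]
    · rcases le_or_gt 0 b with hb | hb
      · have hb0 : b = 0 := by nlinarith
        simp [hb0]
      · nlinarith [Real.sinh_nonpos_iff.2 ha.le, Real.sinh_nonpos_iff.2 hb.le]
  linarith

lemma master_low (lam X : ℝ) (h0 : 0 ≤ lam) :
    Real.cosh (lam * X) ≤ 1 + (lam*X)^2/2 + lam^4/2 * Real.cosh ((2+lam)*X) := by
  have h1 := cosh_taylor (lam*X)
  have h2 : X^4 ≤ 4 * Real.cosh (2*X) := by
    have ha := one_add_sq_le_cosh X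
    have hb := Real.cosh_two_mul X
    nlinarith [Real.cosh_pos X, sq_nonneg (Real.sinh X), sq_nonneg X]
  have h4 : Real.cosh (2*X) * Real.cosh (lam*X) ≤ Real.cosh ((2+lam)*X) := by
    have := cosh_mul_cosh_le (2*X) (lam*X) (by nlinarith [sq_nonneg X])
    rw [show 2*X + lam*X = (2+lam)*X by ring] at this
    exact this
  have h6 : X^4 * Real.cosh (lam*X) ≤ 4 * Real.cosh ((2+lam)*X) := by
    nlinarith [mul_le_mul_of_nonneg_right h2 (Real.cosh_pos (lam*X)).le, h4,
      Real.cosh_pos (lam*X), Real.cosh_pos (2*X)]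
  have h7 := mul_le_mul_of_nonneg_left h6 (show (0:ℝ) ≤ lam^4/8 by positivity)
  nlinarith [h1, h7, pow_nonneg h0 4]


set_option maxHeartbeats 1000000 in
/-- Diffusive scaling: if the diffusively rescaled characteristic functions
`M_t(z/√t)` converge to `N e^{−½ z·Dz}` uniformly on compact subsets of `ℂᵈ`, then
`(1/t) ∑_x ‖x‖₂² p_t(x) → N·tr(D)`. -/
theorem stmt_14 {d : ℕ} (hd : 1 ≤ d)
    (D : Matrix (Fin d) (Fin d) ℝ) (hDsymm : D.IsSymm) (hDpos : D.PosDef)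
    (N : ℝ) (hN : 0 ≤ N)
    (p : ℝ → (Fin d → ℤ) → ℝ)
    (hp0 : ∀ t : ℝ, 0 < t → ∀ x, 0 ≤ p t x)
    (hpN : ∀ t : ℝ, 0 < t → HasSum (p t) N)
    (hpexp : ∀ t : ℝ, 0 < t → ∀ lam : ℝ, 0 ≤ lam →
      Summable (fun x : Fin d → ℤ => Real.exp (lam * normOne x) * p t x))
    (M : ℝ → (Fin d → ℂ) → ℂ)
    (hM : ∀ (t : ℝ) (z : Fin d → ℂ),
      M t z = ∑' x : Fin d → ℤ,
        Complex.exp (Complex.I * ∑ j, z j * (x j : ℂ)) * (p t x : ℂ))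
    (hconv : ∀ K : Set (Fin d → ℂ), IsCompact K →
      TendstoUniformlyOn
        (fun (t : ℝ) (z : Fin d → ℂ) => M t (fun i => z i / (Real.sqrt t : ℂ)))
        (fun z : Fin d → ℂ =>
          (N : ℂ) * Complex.exp (-(1 / 2) * ∑ i, ∑ j, (D i j : ℂ) * z i * z j))
        atTop K)
 :
    Tendsto
      (fun t : ℝ => (1 / t) * ∑' x : Fin d → ℤ, (∑ i, ((x i : ℝ)) ^ 2) * p t x)
      atTop
      (nhds (N * D.trace)) := by
  classical
  have hdiag : ∀ i : Fin d, 0 < D i i := by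
    intro i
    have hne : (Pi.single i (1:ℝ)) ≠ (0 : Fin d → ℝ) := by
      intro h
      have := congrFun h i
      simp [Pi.single_eq_same] at this
    have h := hDpos.dotProduct_mulVec_pos (x := Pi.single i 1) hne
    simpa [dotProduct, Matrix.mulVec, Pi.single_apply, mul_ite, ite_mul,
      Finset.sum_ite_eq, Finset.sum_ite_eq'] using h
  -- summability lemmas
  have hsum_exp : ∀ (t : ℝ), 0 < t → ∀ (i : Fin d) (b : ℝ),
      Summable (fun x : Fin d → ℤ => Real.exp (b * ((x i : ℤ) : ℝ)) * p t x) := by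
    intro t ht i b
    refine Summable.of_nonneg_of_le
      (fun x => mul_nonneg (Real.exp_pos _).le (hp0 t ht x)) (fun x => ?_)
      (hpexp t ht |b| (abs_nonneg b))
    refine mul_le_mul_of_nonneg_right (Real.exp_le_exp.2 ?_) (hp0 t ht x)
    have h1 : |((x i : ℤ):ℝ)| ≤ normOne x :=
      Finset.single_le_sum (f := fun j => |((x j : ℤ):ℝ)|)
        (fun j _ => abs_nonneg _) (Finset.mem_univ i)
    calc b * ((x i:ℤ):ℝ) ≤ |b * ((x i:ℤ):ℝ)| := le_abs_self _
      _ = |b| * |((x i:ℤ):ℝ)| := abs_mul _ _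
      _ ≤ |b| * normOne x := mul_le_mul_of_nonneg_left h1 (abs_nonneg b)
  have hsum_cosh : ∀ (t : ℝ), 0 < t → ∀ (i : Fin d) (b : ℝ),
      Summable (fun x : Fin d → ℤ => Real.cosh (b * ((x i : ℤ) : ℝ)) * p t x) := by
    intro t ht i b
    refine (((hsum_exp t ht i b).add (hsum_exp t ht i (-b))).div_const 2).congr fun x => ?_
    rw [Real.cosh_eq, neg_mul]
    ring
  have hsum_sq : ∀ (t : ℝ), 0 < t → ∀ i : Fin d,
      Summable (fun x : Fin d → ℤ => ((x i : ℤ):ℝ)^2 * p t x) := by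
    intro t ht i
    refine Summable.of_nonneg_of_le
      (fun x => mul_nonneg (sq_nonneg _) (hp0 t ht x)) (fun x => ?_)
      ((hsum_cosh t ht i 1).mul_left 2)
    rw [one_mul]
    have h := one_add_sq_le_cosh ((x i:ℤ):ℝ)
    nlinarith [hp0 t ht x, mul_le_mul_of_nonneg_right
      (show ((x i:ℤ):ℝ)^2 ≤ 2 * Real.cosh ((x i:ℤ):ℝ) by nlinarith) (hp0 t ht x)]
  -- per-coordinate limit
  have key : ∀ i : Fin d, Tendsto
      (fun t : ℝ => (1/t) * ∑' x : Fin d → ℤ, ((x i : ℤ):ℝ)^2 * p t x)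
      atTop (nhds (N * D i i)) := by
    intro i
    have hc : 0 < D i i := hdiag i
    set c := D i i with hcdef
    -- limit of exponential moments
    have hE : ∀ b : ℝ, Tendsto
        (fun t : ℝ => ∑' x : Fin d → ℤ, Real.exp ((b / Real.sqrt t) * ((x i:ℤ):ℝ)) * p t x)
        atTop (nhds (N * Real.exp (c * b^2/2))) := by
      intro b
      set z0 : Fin d → ℂ := fun j => if j = i then (-Complex.I) * (b:ℂ) else 0 with hz0
      have hpt := (hconv {z0} isCompact_singleton).tendsto_at (Set.mem_singleton z0)
      have hsumval : ∑ i', ∑ j', (D i' j' : ℂ) * z0 i' * z0 j' = -((c:ℂ) * (b:ℂ)^2) := by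
        have h1 : ∀ i' : Fin d, (∑ j', (D i' j' : ℂ) * z0 i' * z0 j')
            = if i' = i then (D i' i : ℂ) * z0 i' * z0 i else 0 := by
          intro i'
          by_cases h : i' = i
          · simp only [h, if_true]
            exact Finset.sum_eq_single i (fun j' _ hne => by simp [hz0, hne])
              (fun h => absurd (Finset.mem_univ i) h)
          · simp [hz0, h]
        rw [Finset.sum_congr rfl (fun i' _ => h1 i'),
          Finset.sum_ite_eq' Finset.univ i (fun i' => (D i' i : ℂ) * z0 i' * z0 i),
          if_pos (Finset.mem_univ i)]
        simp only [hz0, if_pos rfl, hcdef]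
        linear_combination ((D i i : ℂ) * (b:ℂ)^2) * Complex.I_sq
      have hval : (N:ℂ) * Complex.exp (-(1/2 : ℂ) * ∑ i', ∑ j', (D i' j' : ℂ) * z0 i' * z0 j')
          = ((N * Real.exp (c * b^2/2) : ℝ) : ℂ) := by
        rw [hsumval, show -(1/2 : ℂ) * -((c:ℂ) * (b:ℂ)^2) = ((c * b^2/2 : ℝ) : ℂ) by push_cast; ring]
        rw [← Complex.ofReal_exp, ← Complex.ofReal_mul]
      rw [hval] at hpt
      have hMe : ∀ᶠ t : ℝ in atTop, M t (fun j => z0 j / (Real.sqrt t : ℂ))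
          = ((∑' x : Fin d → ℤ, Real.exp ((b / Real.sqrt t) * ((x i:ℤ):ℝ)) * p t x : ℝ) : ℂ) := by
        filter_upwards [eventually_gt_atTop (0:ℝ)] with t ht
        rw [hM, Complex.ofReal_tsum]
        refine tsum_congr fun x => ?_
        have hsj : ∑ j, (z0 j / (Real.sqrt t : ℂ)) * ((x j : ℤ) : ℂ)
            = ((-Complex.I) * (b:ℂ) / (Real.sqrt t : ℂ)) * ((x i : ℤ) : ℂ) := by
          rw [Finset.sum_eq_single i (fun j _ hne => by simp [hz0, hne])
            (fun h => absurd (Finset.mem_univ i) h)]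
          simp [hz0]
        rw [hsj]
        have harg : Complex.I * (((-Complex.I) * (b:ℂ) / (Real.sqrt t : ℂ)) * ((x i : ℤ) : ℂ))
            = (((b / Real.sqrt t) * ((x i:ℤ):ℝ) : ℝ) : ℂ) := by
          push_cast
          linear_combination (-(b:ℂ) / ((Real.sqrt t : ℝ) : ℂ) * ((x i : ℤ) : ℂ)) * Complex.I_sq
        rw [harg]
        push_cast
        ring
      have hE2 : Tendsto
          (fun t : ℝ => ((∑' x : Fin d → ℤ, Real.exp ((b / Real.sqrt t) * ((x i:ℤ):ℝ)) * p t x : ℝ) : ℂ))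
          atTop (nhds ((N * Real.exp (c * b^2/2) : ℝ) : ℂ)) := Tendsto.congr' hMe hpt
      have := (Complex.continuous_re.tendsto _).comp hE2
      simpa only [Function.comp_def, Complex.ofReal_re] using this
    -- limit of cosh moments
    have hCh : ∀ b : ℝ, Tendsto
        (fun t : ℝ => ∑' x : Fin d → ℤ, Real.cosh ((b / Real.sqrt t) * ((x i:ℤ):ℝ)) * p t x)
        atTop (nhds (N * Real.exp (c * b^2/2))) := by
      intro b
      have h2 := ((hE b).add (hE (-b))).div_const 2
      have hlim : (N * Real.exp (c * b^2/2) + N * Real.exp (c * (-b)^2/2))/2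
          = N * Real.exp (c * b^2/2) := by rw [neg_sq]; ring
      rw [hlim] at h2
      refine Tendsto.congr' ?_ h2
      filter_upwards [eventually_gt_atTop (0:ℝ)] with t ht
      rw [← Summable.tsum_add (hsum_exp t ht i (b / Real.sqrt t)) (hsum_exp t ht i (-b / Real.sqrt t)),
        ← tsum_div_const]
      refine tsum_congr fun x => ?_
      rw [show (-b / Real.sqrt t) * ((x i:ℤ):ℝ) = -((b / Real.sqrt t) * ((x i:ℤ):ℝ)) by ring,
        Real.cosh_eq]
      ring
    -- inequality (a)
    have ineq_a : ∀ t : ℝ, 0 < t → ∀ lam : ℝ, 0 < lam →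
        N + (lam^2/2) * ((1/t) * ∑' x : Fin d → ℤ, ((x i:ℤ):ℝ)^2 * p t x)
          ≤ ∑' x : Fin d → ℤ, Real.cosh ((lam / Real.sqrt t) * ((x i:ℤ):ℝ)) * p t x := by
      intro t ht lam hlam
      have hst : Real.sqrt t ^ 2 = t := Real.sq_sqrt ht.le
      have hL : N + (lam^2/2) * ((1/t) * ∑' x : Fin d → ℤ, ((x i:ℤ):ℝ)^2 * p t x)
          = ∑' x : Fin d → ℤ, (p t x + (lam^2/(2*t)) * (((x i:ℤ):ℝ)^2 * p t x)) := by
        rw [Summable.tsum_add (hpN t ht).summable ((hsum_sq t ht i).mul_left _), tsum_mul_left,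
          (hpN t ht).tsum_eq]
        ring
      rw [hL]
      refine Summable.tsum_le_tsum (fun x => ?_)
        ((hpN t ht).summable.add ((hsum_sq t ht i).mul_left _))
        (hsum_cosh t ht i (lam / Real.sqrt t))
      have hv2 : ((lam / Real.sqrt t) * ((x i:ℤ):ℝ))^2 = lam^2/t * ((x i:ℤ):ℝ)^2 := by
        rw [mul_pow, div_pow, hst]
      have h1 := mul_le_mul_of_nonneg_right
        (one_add_sq_le_cosh ((lam / Real.sqrt t) * ((x i:ℤ):ℝ))) (hp0 t ht x)
      rw [hv2] at h1
      calc p t x + lam^2/(2*t) * (((x i:ℤ):ℝ)^2 * p t x)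
          = (1 + lam^2/t * ((x i:ℤ):ℝ)^2 / 2) * p t x := by ring
        _ ≤ _ := h1
    -- inequality (b)
    have ineq_b : ∀ t : ℝ, 0 < t → ∀ lam : ℝ, 0 < lam →
        (∑' x : Fin d → ℤ, Real.cosh ((lam / Real.sqrt t) * ((x i:ℤ):ℝ)) * p t x)
          ≤ N + (lam^2/2) * ((1/t) * ∑' x : Fin d → ℤ, ((x i:ℤ):ℝ)^2 * p t x)
            + (lam^4/2) * ∑' x : Fin d → ℤ, Real.cosh (((2+lam) / Real.sqrt t) * ((x i:ℤ):ℝ)) * p t x := by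
      intro t ht lam hlam
      have hst : Real.sqrt t ^ 2 = t := Real.sq_sqrt ht.le
      have hR : N + (lam^2/2) * ((1/t) * ∑' x : Fin d → ℤ, ((x i:ℤ):ℝ)^2 * p t x)
            + (lam^4/2) * ∑' x : Fin d → ℤ, Real.cosh (((2+lam) / Real.sqrt t) * ((x i:ℤ):ℝ)) * p t x
          = ∑' x : Fin d → ℤ, (p t x + (lam^2/(2*t)) * (((x i:ℤ):ℝ)^2 * p t x)
            + (lam^4/2) * (Real.cosh (((2+lam) / Real.sqrt t) * ((x i:ℤ):ℝ)) * p t x)) := by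
        rw [Summable.tsum_add ((hpN t ht).summable.add ((hsum_sq t ht i).mul_left _))
          ((hsum_cosh t ht i ((2+lam) / Real.sqrt t)).mul_left _),
          Summable.tsum_add (hpN t ht).summable ((hsum_sq t ht i).mul_left _),
          tsum_mul_left, tsum_mul_left, (hpN t ht).tsum_eq]
        ring
      rw [hR]
      refine Summable.tsum_le_tsum (fun x => ?_) (hsum_cosh t ht i (lam / Real.sqrt t))
        (((hpN t ht).summable.add ((hsum_sq t ht i).mul_left _)).add
          ((hsum_cosh t ht i ((2+lam) / Real.sqrt t)).mul_left _))
      have hm := master_low lam (((x i:ℤ):ℝ) / Real.sqrt t) hlam.le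
      rw [show lam * (((x i:ℤ):ℝ) / Real.sqrt t) = (lam / Real.sqrt t) * ((x i:ℤ):ℝ) by ring,
        show (2+lam) * (((x i:ℤ):ℝ) / Real.sqrt t) = ((2+lam) / Real.sqrt t) * ((x i:ℤ):ℝ) by ring] at hm
      have h1 := mul_le_mul_of_nonneg_right hm (hp0 t ht x)
      have hv2 : ((lam / Real.sqrt t) * ((x i:ℤ):ℝ))^2 = lam^2/t * ((x i:ℤ):ℝ)^2 := by
        rw [mul_pow, div_pow, hst]
      rw [hv2] at h1
      calc Real.cosh ((lam / Real.sqrt t) * ((x i:ℤ):ℝ)) * p t x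
          ≤ (1 + lam^2/t * ((x i:ℤ):ℝ)^2/2
            + lam^4/2 * Real.cosh (((2+lam) / Real.sqrt t) * ((x i:ℤ):ℝ))) * p t x := h1
        _ = _ := by ring
    -- final epsilon argument
    rw [Metric.tendsto_nhds]
    intro ε hε
    have hK1 : (0:ℝ) ≤ N * (c^2/2) * Real.exp (c/2) :=
      mul_nonneg (mul_nonneg hN (by positivity)) (Real.exp_pos _).le
    have hK2 : (0:ℝ) < N * Real.exp (9*c/2) + 1 := by
      nlinarith [mul_nonneg hN (Real.exp_pos (9*c/2)).le]
    obtain ⟨K, hKdef⟩ : ∃ K : ℝ, K = N * (c^2/2) * Real.exp (c/2) + (N * Real.exp (9*c/2) + 1) :=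
      ⟨_, rfl⟩
    have hK : 0 < K := by rw [hKdef]; linarith
    obtain ⟨lam, hlamdef⟩ : ∃ lam : ℝ, lam = min 1 (Real.sqrt (ε/(4*K))) := ⟨_, rfl⟩
    have hlam0 : 0 < lam := by
      rw [hlamdef]; exact lt_min one_pos (Real.sqrt_pos.2 (by positivity))
    have hlam1 : lam ≤ 1 := by rw [hlamdef]; exact min_le_left _ _
    have hlamsq : lam^2 * K ≤ ε/4 := by
      have h1 : lam ≤ Real.sqrt (ε/(4*K)) := by rw [hlamdef]; exact min_le_right _ _
      have h2 : lam^2 ≤ ε/(4*K) := by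
        rw [← Real.sq_sqrt (show (0:ℝ) ≤ ε/(4*K) by positivity)]
        exact pow_le_pow_left₀ hlam0.le h1 2
      calc lam^2 * K ≤ (ε/(4*K)) * K := mul_le_mul_of_nonneg_right h2 hK.le
        _ = ε/4 := by field_simp
    have need1 : lam^2 * (N * (c^2/2) * Real.exp (c/2)) ≤ ε/4 := by
      rw [hKdef] at hlamsq
      nlinarith [hlamsq, sq_nonneg lam, hK2]
    have need2 : lam^2 * (N * Real.exp (9*c/2) + 1) ≤ ε/4 := by
      rw [hKdef] at hlamsq
      nlinarith [hlamsq, sq_nonneg lam, hK1]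
    obtain ⟨δ, hδdef⟩ : ∃ δ : ℝ, δ = min 1 (lam^2 * ε/8) := ⟨_, rfl⟩
    have hδ0 : 0 < δ := by rw [hδdef]; exact lt_min one_pos (by positivity)
    have hδ1 : δ ≤ 1 := by rw [hδdef]; exact min_le_left _ _
    have hδ2 : δ ≤ lam^2 * ε/8 := by rw [hδdef]; exact min_le_right _ _
    have E1 := (Metric.tendsto_nhds.mp (hCh lam)) δ hδ0
    have E2 := (Metric.tendsto_nhds.mp (hCh (2+lam))) δ hδ0
    filter_upwards [E1, E2, eventually_gt_atTop (0:ℝ)] with t h1 h2 ht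
    beta_reduce at h1 h2 ⊢
    have ha := ineq_a t ht lam hlam0
    have hb := ineq_b t ht lam hlam0
    rw [Real.dist_eq] at h1 h2 ⊢
    have hA1 : (∑' x : Fin d → ℤ, Real.cosh ((lam / Real.sqrt t) * ((x i:ℤ):ℝ)) * p t x)
        ≤ N * Real.exp (c * lam^2/2) + δ := by linarith [(abs_lt.mp h1).2]
    have hA2 : N * Real.exp (c * lam^2/2) - δ
        ≤ ∑' x : Fin d → ℤ, Real.cosh ((lam / Real.sqrt t) * ((x i:ℤ):ℝ)) * p t x := by
      linarith [(abs_lt.mp h1).1]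
    have hexp4 : Real.exp (c * (2+lam)^2/2) ≤ Real.exp (9*c/2) := by
      have h9 : (2+lam)^2 ≤ 9 := by nlinarith [hlam1, hlam0.le]
      exact Real.exp_le_exp.2 (by nlinarith [mul_le_mul_of_nonneg_left h9 hc.le])
    have hBb : (∑' x : Fin d → ℤ, Real.cosh (((2+lam) / Real.sqrt t) * ((x i:ℤ):ℝ)) * p t x)
        ≤ N * Real.exp (9*c/2) + 1 := by
      have := (abs_lt.mp h2).2
      nlinarith [mul_le_mul_of_nonneg_left hexp4 hN]
    have hu0 : (0:ℝ) ≤ c * lam^2/2 := by positivity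
    have hexp1 : 1 + c * lam^2/2 ≤ Real.exp (c * lam^2/2) := by
      linarith [Real.add_one_le_exp (c * lam^2/2)]
    have hexp3 : Real.exp (c * lam^2/2) ≤ Real.exp (c/2) := by
      have h9 : lam^2 ≤ 1 := by nlinarith [hlam1, hlam0.le]
      exact Real.exp_le_exp.2 (by nlinarith [mul_le_mul_of_nonneg_left h9 hc.le])
    have hexp2 : Real.exp (c * lam^2/2) - 1 ≤ (c * lam^2/2) * Real.exp (c * lam^2/2) := by
      have h := Real.add_one_le_exp (-(c * lam^2/2))
      have h' := mul_le_mul_of_nonneg_right h (Real.exp_pos (c * lam^2/2)).le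
      rw [← Real.exp_add, neg_add_cancel, Real.exp_zero] at h'
      nlinarith [h']
    have step1 : Real.exp (c * lam^2/2) - 1 ≤ (c * lam^2/2) * Real.exp (c/2) := by
      nlinarith [hexp2, hexp3, hu0]
    have step2 : Real.exp (c * lam^2/2) - 1 - c * lam^2/2
        ≤ (c * lam^2/2) * ((c * lam^2/2) * Real.exp (c/2)) := by
      nlinarith [hexp2, mul_le_mul_of_nonneg_left step1 hu0, hu0]
    have step3 := mul_le_mul_of_nonneg_left step2 hN
    have need1' := mul_le_mul_of_nonneg_left need1 (show (0:ℝ) ≤ lam^2/2 by positivity)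
    have need2' := mul_le_mul_of_nonneg_left need2 (show (0:ℝ) ≤ lam^2/2 by positivity)
    have hup : (lam^2/2) * ((1/t) * ∑' x : Fin d → ℤ, ((x i:ℤ):ℝ)^2 * p t x)
        ≤ (lam^2/2) * (N * c + ε/2) := by
      linarith [ha, hA1, step3, hδ2, need1']
    have hq_up : (1/t) * (∑' x : Fin d → ℤ, ((x i:ℤ):ℝ)^2 * p t x) ≤ N * c + ε/2 :=
      le_of_mul_le_mul_left hup (show (0:ℝ) < lam^2/2 by positivity)
    have hlow : (lam^2/2) * (N * c - ε/2)
        ≤ (lam^2/2) * ((1/t) * ∑' x : Fin d → ℤ, ((x i:ℤ):ℝ)^2 * p t x) := by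
      linarith [hb, hA2, hδ2, need2',
        mul_le_mul_of_nonneg_left hBb (show (0:ℝ) ≤ lam^4/2 by positivity),
        mul_le_mul_of_nonneg_left hexp1 hN]
    have hq_low : N * c - ε/2 ≤ (1/t) * ∑' x : Fin d → ℤ, ((x i:ℤ):ℝ)^2 * p t x :=
      le_of_mul_le_mul_left hlow (show (0:ℝ) < lam^2/2 by positivity)
    rw [abs_lt]
    constructor <;> [skip; skip] <;> linarith
  -- combine coordinates
  have h1 : Tendsto (fun t : ℝ => ∑ i : Fin d, (1/t) * ∑' x : Fin d → ℤ, ((x i:ℤ):ℝ)^2 * p t x)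
      atTop (nhds (∑ i : Fin d, N * D i i)) :=
    tendsto_finset_sum Finset.univ (fun i _ => key i)
  have h2 : (∑ i : Fin d, N * D i i) = N * D.trace := by
    rw [Matrix.trace, Finset.mul_sum]
    rfl
  rw [h2] at h1
  refine Tendsto.congr' ?_ h1
  filter_upwards [eventually_gt_atTop (0:ℝ)] with t ht
  rw [← Finset.mul_sum, ← Summable.tsum_finsetSum (fun i _ => hsum_sq t ht i)]
  congr 1
  refine tsum_congr fun x => ?_
  rw [Finset.sum_mul]
end

section
/- Let H be a complex Hilbert space, let a ∈ ℝ, and let L : H →L[ℂ] H be a bounded operator satisfying Re ⟨f, L f⟩ ≥ −a ‖f‖² for all f ∈ H. Then for every t ≥ 0, the operator exponential satisfies ‖exp(−t L)‖ ≤ e^{t a}. -/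
open NormedSpace Set

lemma hasDerivAt_comp_ofReal' {E : Type*} [NormedAddCommGroup E] [NormedSpace ℂ E]
    {e : ℂ → E} {e' : E} {z : ℝ} (hf : HasDerivAt e e' z) :
    HasDerivAt (fun y : ℝ => e y) e' z := by
  have h := (hf.hasFDerivAt.restrictScalars ℝ).comp_hasDerivAt z Complex.ofRealCLM.hasDerivAt
  simp at h; exact h


/-- if `Re ⟨f, L f⟩ ≥ −a‖f‖²` for all `f`, then `‖exp(−tL)‖ ≤ e^{ta}` for all
`t ≥ 0`. -/
theorem stmt_16 {H : Type*} [NormedAddCommGroup H] [InnerProductSpace ℂ H] [CompleteSpace H]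
    (a : ℝ) (L : H →L[ℂ] H)
    (hL : ∀ f : H, -a * ‖f‖ ^ 2 ≤ ((inner ℂ f (L f) : ℂ)).re)
    (t : ℝ) (ht : 0 ≤ t) :
    ‖NormedSpace.exp (((-t : ℝ) : ℂ) • L)‖ ≤ Real.exp (t * a) := by
  set A : H →L[ℂ] H := -L with hA
  have hrw : (((-t : ℝ) : ℂ)) • L = (t : ℂ) • A := by
    simp [hA, smul_neg, neg_smul]
  rw [hrw]
  refine ContinuousLinearMap.opNorm_le_bound _ (Real.exp_pos _).le fun f => ?_
  -- the orbit
  set u : ℝ → H := fun s => exp ((s : ℂ) • A) f with hu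
  have hu' : ∀ s : ℝ, HasDerivAt u (A (u s)) s := by
    intro s
    have h1 : HasDerivAt (fun z : ℂ => exp (z • A)) (A * exp ((s : ℂ) • A)) (s : ℂ) :=
      hasDerivAt_exp_smul_const' A (s : ℂ)
    have h2 := hasDerivAt_comp_ofReal' h1
    have := (((ContinuousLinearMap.apply ℂ H f).restrictScalars ℝ).hasFDerivAt).comp_hasDerivAt s h2
    simp [hu] at this; exact this
  -- the squared norm
  set φ : ℝ → ℝ := fun s => ‖u s‖ ^ 2 with hφ
  have hφeq : ∀ s, φ s = ((inner ℂ (u s) (u s) : ℂ)).re := by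
    intro s; exact (inner_self_eq_norm_sq (𝕜 := ℂ) (u s)).symm
  have hφ' : ∀ s : ℝ, HasDerivAt φ
      (((inner ℂ (u s) (A (u s)) : ℂ) + (inner ℂ (A (u s)) (u s) : ℂ)).re) s := by
    intro s
    have h1 : HasDerivAt (fun s => (inner ℂ (u s) (u s) : ℂ))
        ((inner ℂ (u s) (A (u s)) : ℂ) + (inner ℂ (A (u s)) (u s) : ℂ)) s :=
      (hu' s).inner ℂ (hu' s)
    have h2 := (Complex.reCLM.hasFDerivAt).comp_hasDerivAt s h1
    refine HasDerivAt.congr_deriv (HasDerivAt.congr_of_eventuallyEq h2 ?_) rfl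
    filter_upwards with x
    exact (hφeq x)
  -- bound on the derivative
  have hbound : ∀ s : ℝ,
      ((inner ℂ (u s) (A (u s)) : ℂ) + (inner ℂ (A (u s)) (u s) : ℂ)).re ≤ 2 * a * φ s := by
    intro s
    have hc : (inner ℂ (A (u s)) (u s) : ℂ) = starRingEnd ℂ (inner ℂ (u s) (A (u s)) : ℂ) :=
      (inner_conj_symm _ _).symm
    have h2 : ((inner ℂ (u s) (A (u s)) : ℂ) + (inner ℂ (A (u s)) (u s) : ℂ)).re
        = 2 * ((inner ℂ (u s) (A (u s)) : ℂ)).re := by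
      rw [hc]; simp only [Complex.add_re, Complex.conj_re]; ring
    rw [h2]
    have hAL : (inner ℂ (u s) (A (u s)) : ℂ) = -(inner ℂ (u s) (L (u s)) : ℂ) := by
      simp [hA]
    have := hL (u s)
    rw [hAL]
    have : (-(inner ℂ (u s) (L (u s)) : ℂ)).re ≤ a * ‖u s‖ ^ 2 := by
      have := hL (u s); simp only [Complex.neg_re]; linarith
    calc 2 * (-(inner ℂ (u s) (L (u s)) : ℂ)).re ≤ 2 * (a * ‖u s‖ ^ 2) := by linarith
      _ = 2 * a * φ s := by rw [hφ]; ring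
  -- Gronwall
  have hg := le_gronwallBound_of_liminf_deriv_right_le (f := φ)
    (f' := fun s => ((inner ℂ (u s) (A (u s)) : ℂ) + (inner ℂ (A (u s)) (u s) : ℂ)).re)
    (δ := ‖f‖ ^ 2) (K := 2 * a) (ε := 0) (a := 0) (b := t)
    (fun s _ => ((hφ' s).continuousAt).continuousWithinAt)
    (fun x _ r hr => ((hφ' x).hasDerivWithinAt.liminf_right_slope_le hr))
    (by rw [hφ]; simp [hu])
    (fun x hx => by simpa using hbound x)
  have := hg t ⟨ht, le_refl t⟩
  rw [gronwallBound_ε0] at this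
  -- conclude
  have hφt : ‖u t‖ ^ 2 ≤ (Real.exp (t * a) * ‖f‖) ^ 2 := by
    have : φ t ≤ ‖f‖ ^ 2 * Real.exp (2 * a * t) := by simpa using this
    calc ‖u t‖ ^ 2 = φ t := rfl
      _ ≤ ‖f‖ ^ 2 * Real.exp (2 * a * t) := this
      _ = (Real.exp (t * a) * ‖f‖) ^ 2 := by
          rw [mul_pow, ← Real.exp_nat_mul]
          ring_nf
  have h1 := Real.sqrt_le_sqrt hφt
  rwa [Real.sqrt_sq (norm_nonneg _), Real.sqrt_sq (by positivity)] at h1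
end
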